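/- arXiv:2303.17414 — 10 statements merged into one kernel-verified Lean document; each statement's English description precedes it below -/
import Mathlib

section
/- Let f and g be continuous quasi-isometries of [0,∞). Suppose f(x)/x → c' as x → ∞ for some c' > 0, and suppose S_g = [a,b] with 0 < a ≤ b. Then S_{f∘g} = [c'a, c'b]. -/
/-!
A quasi-isometry `g` of the ray tends to infinity, so along any sequence `u n → ∞` the factor
`f (g (u n)) / g (u n)` of `f (g (u n)) / u n = (g (u n) / u n) * (f (g (u n)) / g (u n))`
tends to `c' ≠ 0`. Hence the subsequential limits of `(f ∘ g) x / x` are exactly `c'` times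
those of `g x / x`.
-/

open Filter Topology

/-- A quasi-isometry of the ray `[0,∞)`, modelled as a real function:
it maps nonnegatives to nonnegatives, satisfies the two-sided quasi-isometry
inequality with a constant `K > 1` on nonnegative arguments, and its image is
coarsely dense in `[0,∞)`. -/
def IsQI (g : ℝ → ℝ) : Prop :=
  (∀ x, 0 ≤ x → 0 ≤ g x) ∧
  (∃ K : ℝ, 1 < K ∧ ∀ x y, 0 ≤ x → 0 ≤ y →
    (1 / K) * |x - y| - K ≤ |g x - g y| ∧ |g x - g y| ≤ K * |x - y| + K) ∧
  (∃ K' : ℝ, 0 < K' ∧ ∀ z, 0 ≤ z → ∃ x, 0 ≤ x ∧ |g x - z| ≤ K')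

/-- `Sset g` is the set of all subsequential limits of `g x / x` as `x → ∞`:
limits of `g (u n) / u n` over sequences `u n → ∞` for which this quotient converges. -/
def Sset (g : ℝ → ℝ) : Set ℝ :=
  { c | ∃ u : ℕ → ℝ, (∀ n, 0 ≤ u n) ∧ Tendsto u atTop atTop ∧
      Tendsto (fun n => g (u n) / u n) atTop (𝓝 c) }

/-- `g` is piecewise linear on `[0,∞)`: there is a strictly increasing divergent
sequence of breakpoints starting at `0` on whose consecutive intervals `g` is affine. -/
def IsPL (g : ℝ → ℝ) : Prop :=
  ∃ t : ℕ → ℝ, t 0 = 0 ∧ StrictMono t ∧ Tendsto t atTop atTop ∧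
    ∀ n, ∃ lam : ℝ, ∀ x ∈ Set.Icc (t n) (t (n + 1)),
      g x = g (t n) + lam * (x - t n)

/-- Two quasi-isometries `f, g` of `[0,∞)` are H-equivalent if `f` is boundedly close
(on `[0,∞)`) to `h ∘ g` for some quasi-isometry `h` with `h y / y → 1`. -/
def HEquiv (f g : ℝ → ℝ) : Prop :=
  ∃ h : ℝ → ℝ, IsQI h ∧ Tendsto (fun y => h y / y) atTop (𝓝 1) ∧
    ∃ C : ℝ, ∀ x, 0 ≤ x → |f x - h (g x)| ≤ C

theorem IsQI.tendsto_atTop {g : ℝ → ℝ} (hg : IsQI g) : Tendsto g atTop atTop := by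
  obtain ⟨hg_nonneg, ⟨K, hK1, hK⟩, -⟩ := hg
  have hK0 : 0 < K := one_pos.trans hK1
  have lower_bound : ∀ᶠ x in atTop, (1 / K) * x - K - g 0 ≤ g x := by
    filter_upwards [eventually_ge_atTop 0] with x hx
    have hqi := (hK x 0 hx le_rfl).1
    rw [sub_zero, abs_of_nonneg hx] at hqi
    have hsub := abs_sub (g x) (g 0)
    rw [abs_of_nonneg (hg_nonneg x hx), abs_of_nonneg (hg_nonneg 0 le_rfl)] at hsub
    linarith
  refine tendsto_atTop_mono' _ lower_bound ?_
  exact tendsto_atTop_add_const_right _ _ <| tendsto_atTop_add_const_right _ _ <|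
    tendsto_id.const_mul_atTop (by positivity)

theorem mul_mem_Sset_comp_iff {f g : ℝ → ℝ} {c c' : ℝ} (hg : Tendsto g atTop atTop)
    (hf : Tendsto (fun x => f x / x) atTop (𝓝 c')) (hc' : c' ≠ 0) :
    c * c' ∈ Sset (f ∘ g) ↔ c ∈ Sset g := by
  refine exists_congr fun u => and_congr_right fun _ => and_congr_right fun hu => ?_
  have hgu := hg.comp hu
  have hfactor : (fun n => g (u n) / u n * (f (g (u n)) / g (u n)))
      =ᶠ[atTop] fun n => (f ∘ g) (u n) / u n := by
    filter_upwards [hgu.eventually_ne_atTop 0] with n hn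
    simp only [Function.comp_apply] at hn ⊢
    rw [mul_comm, div_mul_div_cancel₀ hn]
  rw [← tendsto_congr' hfactor]
  exact tendsto_mul_iff_of_ne_zero (hf.comp hgu) hc'

theorem Sset_comp_eq_image {f g : ℝ → ℝ} {c' : ℝ} (hg : Tendsto g atTop atTop)
    (hf : Tendsto (fun x => f x / x) atTop (𝓝 c')) (hc' : c' ≠ 0) :
    Sset (f ∘ g) = (c' * ·) '' Sset g := by
  ext d
  obtain ⟨c, rfl⟩ : ∃ c, d = c * c' := ⟨d / c', (div_mul_cancel₀ d hc').symm⟩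
  rw [mul_mem_Sset_comp_iff hg hf hc', mul_comm, (mul_right_injective₀ hc').mem_set_image]

theorem stmt1_general (f g : ℝ → ℝ) (hg : IsQI g)
    (c' a b : ℝ) (hc' : 0 < c')
    (hft : Tendsto (fun x => f x / x) atTop (𝓝 c'))
    (hSg : Sset g = Set.Icc a b) :
    Sset (f ∘ g) = Set.Icc (c' * a) (c' * b) := by
  rw [Sset_comp_eq_image hg.tendsto_atTop hft hc'.ne', hSg, Set.image_mul_left_Icc' hc']

/-- If `f x / x → c' > 0` and `S_g = [a,b] ⊆ (0,∞)`, then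
`S_{f ∘ g} = [c'a, c'b]`. -/
theorem stmt1 (f g : ℝ → ℝ) (hf : IsQI f) (hg : IsQI g)
    (hfc : ContinuousOn f (Set.Ici 0)) (hgc : ContinuousOn g (Set.Ici 0))
    (c' a b : ℝ) (hc' : 0 < c') (ha : 0 < a) (hab : a ≤ b)
    (hft : Tendsto (fun x => f x / x) atTop (𝓝 c'))
    (hSg : Sset g = Set.Icc a b) :
    Sset (f ∘ g) = Set.Icc (c' * a) (c' * b) :=
  stmt1_general f g hg c' a b hc' hft hSg
end

section
/- For every pair of real numbers 0 < a ≤ b there exists a continuous, strictly increasing, piecewise-linear quasi-isometry g : [0,∞) → [0,∞) such that S_g = [a,b]. In other words, the map sending a quasi-isometry g to the compact interval S_g is surjective onto the collection of all compact subintervals of (0,∞). -/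
open Filter Topology

/-!
Take slopes alternating between `a` and `b` on the intervals `[t n, t (n + 1)]`, where
`t n = n * n!` grows so fast that `t n / t (n + 1) → 0`. Since all slopes lie in `[a, b]`,
`a ≤ g x / x ≤ b`. At the end of an interval of slope `c`, the part of `g` built before
that interval is negligible, so `g x / x` is close to `c` there: along the right ends of the
`a`-intervals it tends to `a`, along those of the `b`-intervals to `b`, and the intermediate
value theorem applied to `g x / x` between them reaches every value in between.
-/

/-- The function with slope `σ n` on `[t n, t (n + 1)]` and value `0` at `t 0`: for monotone `t`
and `x ≥ t 0`, the `n`-th term is `σ n` times the length of `[t n, t (n + 1)] ∩ (-∞, x]`. -/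
noncomputable def pwLinear (t σ : ℕ → ℝ) (x : ℝ) : ℝ :=
  ∑ᶠ n, σ n * (min x (t (n + 1)) - min x (t n))

def SlopeBounded (m M : ℝ) (g : ℝ → ℝ) : Prop :=
  ∀ x y, 0 ≤ y → y ≤ x → m * (x - y) ≤ g x - g y ∧ g x - g y ≤ M * (x - y)

lemma monotone_min_sub_min {x y : ℝ} (hyx : y ≤ x) :
    Monotone fun s : ℝ => min x s - min y s := by
  intro s s' hs
  simp only [min_def]
  split_ifs <;> linarith

section PiecewiseLinear

variable {t : ℕ → ℝ} (σ : ℕ → ℝ)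

lemma pwLinear_eq_sum (ht : Monotone t) {x : ℝ} {N : ℕ} (hN : x ≤ t N) :
    pwLinear t σ x = ∑ n ∈ Finset.range N, σ n * (min x (t (n + 1)) - min x (t n)) := by
  refine finsum_eq_finsetSum_of_support_subset _ fun n hn => ?_
  by_contra hnN
  have hNn : N ≤ n := by simpa using hnN
  have h0 : min x (t n) = x := min_eq_left (hN.trans (ht hNn))
  have h1 : min x (t (n + 1)) = x := min_eq_left (hN.trans (ht (hNn.trans n.le_succ)))
  exact hn (by simp [h0, h1])

lemma pwLinear_zero (ht : Monotone t) (ht0 : t 0 = 0) : pwLinear t σ 0 = 0 := by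
  simp [pwLinear_eq_sum σ ht (N := 0) ht0.ge]

lemma pwLinear_eq_of_mem_Icc (ht : Monotone t) {k : ℕ} {x : ℝ}
    (hx : x ∈ Set.Icc (t k) (t (k + 1))) :
    pwLinear t σ x = pwLinear t σ (t k) + σ k * (x - t k) := by
  have hk : t k ≤ t (k + 1) := ht k.le_succ
  rw [pwLinear_eq_sum σ ht hx.2, pwLinear_eq_sum σ ht hk, Finset.sum_range_succ,
    Finset.sum_range_succ, min_eq_left hx.2, min_eq_right hx.1, min_eq_left hk, min_self,
    sub_self, mul_zero, add_zero]
  congr 1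
  refine Finset.sum_congr rfl fun n hn => ?_
  have h1 : t (n + 1) ≤ t k := ht (Finset.mem_range.1 hn)
  have h0 : t n ≤ t k := ht (Finset.mem_range.1 hn).le
  rw [min_eq_right (h1.trans hx.1), min_eq_right (h0.trans hx.1), min_eq_right h1,
    min_eq_right h0]

lemma slopeBounded_pwLinear (ht : Monotone t) (ht0 : t 0 = 0) (htop : Tendsto t atTop atTop)
    {m M : ℝ} (hσ : ∀ n, σ n ∈ Set.Icc m M) : SlopeBounded m M (pwLinear t σ) := by
  intro x y hy hyx
  obtain ⟨N, hN⟩ := (htop.eventually_ge_atTop x).exists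
  set d : ℕ → ℝ := fun n =>
    (min x (t (n + 1)) - min y (t (n + 1))) - (min x (t n) - min y (t n))
  have hd : ∀ n, 0 ≤ d n := fun n => sub_nonneg.2 (monotone_min_sub_min hyx (ht n.le_succ))
  have hsum : ∑ n ∈ Finset.range N, d n = x - y := by
    rw [Finset.sum_range_sub (fun n => min x (t n) - min y (t n)), min_eq_left hN,
      min_eq_left (hyx.trans hN), ht0, min_eq_right hy, min_eq_right (hy.trans hyx)]
    ring
  have hdiff : pwLinear t σ x - pwLinear t σ y = ∑ n ∈ Finset.range N, σ n * d n := by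
    rw [pwLinear_eq_sum σ ht hN, pwLinear_eq_sum σ ht (hyx.trans hN), ← Finset.sum_sub_distrib]
    exact Finset.sum_congr rfl fun n _ => by ring
  rw [hdiff, ← hsum, Finset.mul_sum, Finset.mul_sum]
  exact ⟨Finset.sum_le_sum fun n _ => mul_le_mul_of_nonneg_right (hσ n).1 (hd n),
    Finset.sum_le_sum fun n _ => mul_le_mul_of_nonneg_right (hσ n).2 (hd n)⟩

end PiecewiseLinear

namespace SlopeBounded

variable {m M : ℝ} {g : ℝ → ℝ} (hg : SlopeBounded m M g)
include hg

lemma le : m ≤ M := by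
  obtain ⟨h1, h2⟩ := hg 1 0 le_rfl zero_le_one
  linarith

lemma abs_sub_bounds (hm : 0 ≤ m) {x y : ℝ} (hx : 0 ≤ x) (hy : 0 ≤ y) :
    m * |x - y| ≤ |g x - g y| ∧ |g x - g y| ≤ M * |x - y| := by
  wlog hyx : y ≤ x generalizing x y
  · rw [abs_sub_comm x, abs_sub_comm (g x)]
    exact this hy hx (le_of_not_ge hyx)
  obtain ⟨h1, h2⟩ := hg x y hy hyx
  rw [abs_of_nonneg (sub_nonneg.2 hyx),
    abs_of_nonneg ((mul_nonneg hm (sub_nonneg.2 hyx)).trans h1)]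
  exact ⟨h1, h2⟩

lemma continuousOn (hm : 0 ≤ m) : ContinuousOn g (Set.Ici 0) :=
  (LipschitzOnWith.of_dist_le' fun _ hx _ hy => (hg.abs_sub_bounds hm hx hy).2).continuousOn

lemma strictMonoOn (hm : 0 < m) : StrictMonoOn g (Set.Ici 0) := fun x hx y _ hxy => by
  nlinarith [(hg y x hx hxy.le).1]

lemma mul_le_apply (hg0 : g 0 = 0) {x : ℝ} (hx : 0 ≤ x) : m * x ≤ g x ∧ g x ≤ M * x := by
  simpa [hg0] using hg x 0 le_rfl hx

lemma surjOn (hm : 0 < m) (hg0 : g 0 = 0) : Set.SurjOn g (Set.Ici 0) (Set.Ici 0) := by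
  intro z (hz : 0 ≤ z)
  have hzm : 0 ≤ z / m := div_nonneg hz hm.le
  have hz_mem : z ∈ Set.Icc (g 0) (g (z / m)) := by
    refine ⟨by rwa [hg0], ?_⟩
    simpa [mul_div_cancel₀ z hm.ne'] using (hg.mul_le_apply hg0 hzm).1
  obtain ⟨x, hx, rfl⟩ := intermediate_value_Icc hzm
    ((hg.continuousOn hm.le).mono fun x hx => hx.1) hz_mem
  exact ⟨x, hx.1, rfl⟩

lemma isQI (hm : 0 < m) (hg0 : g 0 = 0) : IsQI g := by
  have hmM := hg.le
  have hm_inv : 0 < 1 / m := one_div_pos.2 hm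
  have hKpos : 0 < M + 1 / m + 1 := by linarith
  have hK : 1 / (M + 1 / m + 1) ≤ m := by
    rw [div_le_iff₀ hKpos]
    have : m * (1 / m) = 1 := mul_one_div_cancel hm.ne'
    nlinarith
  refine ⟨fun x hx => ?_, ⟨M + 1 / m + 1, by linarith, fun x y hx hy => ?_⟩,
    ⟨1, one_pos, fun z hz => ?_⟩⟩
  · nlinarith [(hg.mul_le_apply hg0 hx).1]
  · obtain ⟨h1, h2⟩ := hg.abs_sub_bounds hm.le hx hy
    have e1 := mul_le_mul_of_nonneg_right hK (abs_nonneg (x - y))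
    have e2 : M * |x - y| ≤ (M + 1 / m + 1) * |x - y| :=
      mul_le_mul_of_nonneg_right (by linarith) (abs_nonneg _)
    exact ⟨by linarith, by linarith⟩
  · obtain ⟨x, hx, rfl⟩ := hg.surjOn hm hg0 hz
    exact ⟨x, hx, by simp⟩

lemma sset_subset (hg0 : g 0 = 0) : Sset g ⊆ Set.Icc m M := by
  rintro c ⟨u, hu0, hutop, hlim⟩
  refine isClosed_Icc.mem_of_tendsto hlim ?_
  filter_upwards [hutop.eventually_gt_atTop 0] with n hn
  obtain ⟨h1, h2⟩ := hg.mul_le_apply hg0 (hu0 n)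
  exact ⟨(le_div_iff₀ hn).2 h1, (div_le_iff₀ hn).2 h2⟩

lemma abs_div_sub_slope_le (hg0 : g 0 = 0) {s r c : ℝ} (hs : 0 ≤ s) (hr : 0 < r)
    (hc : c ∈ Set.Icc m M) (hgr : g r = g s + c * (r - s)) :
    |g r / r - c| ≤ (M - m) * (s / r) := by
  have hsplit : g r / r - c = (g s - c * s) / r := by
    field_simp
    rw [hgr]
    ring
  obtain ⟨h1, h2⟩ := hg.mul_le_apply hg0 hs
  rw [hsplit, abs_div, abs_of_pos hr, mul_div_assoc', div_le_div_iff_of_pos_right hr, abs_le]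
  constructor <;> nlinarith [hc.1, hc.2]

end SlopeBounded

lemma max_min_mem_uIcc (lo hi c : ℝ) : max (min c hi) lo ∈ Set.uIcc lo hi := by
  rcases le_total lo hi with h | h
  · rw [Set.uIcc_of_le h]
    exact ⟨le_max_right _ _, max_le (min_le_right _ _) h⟩
  · rw [Set.uIcc_of_ge h, max_eq_right ((min_le_right _ _).trans h)]
    exact ⟨h, le_rfl⟩

lemma Icc_subset_sset {g : ℝ → ℝ} (hg : ContinuousOn g (Set.Ici 0)) {p q : ℕ → ℝ}
    (hp : ∀ n, 0 < p n) (hpq : ∀ n, p n ≤ q n) (hptop : Tendsto p atTop atTop) {a b : ℝ}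
    (hpa : Tendsto (fun n => g (p n) / p n) atTop (𝓝 a))
    (hqb : Tendsto (fun n => g (q n) / q n) atTop (𝓝 b)) :
    Set.Icc a b ⊆ Sset g := by
  intro c hc
  set target : ℕ → ℝ := fun n => max (min c (g (q n) / q n)) (g (p n) / p n)
  have htarget : Tendsto target atTop (𝓝 c) := by
    have := ((tendsto_const_nhds (x := c)).min hqb).max hpa
    rwa [min_eq_left hc.2, max_eq_left hc.1] at this
  have hivt : ∀ n, ∃ x ∈ Set.Icc (p n) (q n), g x / x = target n := by
    intro n
    have hcont : ContinuousOn (fun x => g x / x) (Set.Icc (p n) (q n)) :=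
      ((hg.mono fun x hx => (hp n).le.trans hx.1).div continuousOn_id) fun x hx =>
        ((hp n).trans_le hx.1).ne'
    rw [← Set.uIcc_of_le (hpq n)] at hcont ⊢
    exact intermediate_value_uIcc hcont (max_min_mem_uIcc _ _ _)
  choose u hu hu_eq using hivt
  exact ⟨u, fun n => (hp n).le.trans (hu n).1, tendsto_atTop_mono (fun n => (hu n).1) hptop,
    by simpa only [hu_eq] using htarget⟩

lemma tendsto_pwLinear_div_of_slope_eq {t σ : ℕ → ℝ} (ht : StrictMono t) (ht0 : t 0 = 0)
    (htop : Tendsto t atTop atTop) {m M : ℝ} (hσ : ∀ n, σ n ∈ Set.Icc m M)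
    (hratio : Tendsto (fun n => t n / t (n + 1)) atTop (𝓝 0)) {φ : ℕ → ℕ}
    (hφ : Tendsto φ atTop atTop) {c : ℝ} (hc : ∀ n, σ (φ n) = c) :
    Tendsto (fun n => pwLinear t σ (t (φ n + 1)) / t (φ n + 1)) atTop (𝓝 c) := by
  have hg := slopeBounded_pwLinear σ ht.monotone ht0 htop hσ
  have hg0 : pwLinear t σ 0 = 0 := pwLinear_zero σ ht.monotone ht0
  have ht_nonneg : ∀ k, 0 ≤ t k := fun k => ht0 ▸ ht.monotone k.zero_le
  refine tendsto_sub_nhds_zero_iff.1 <| squeeze_zero_norm (fun n => ?_)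
    (by simpa using ((hratio.comp hφ).const_mul (M - m)))
  rw [← hc n]
  exact hg.abs_div_sub_slope_le hg0 (ht_nonneg _)
    ((ht_nonneg _).trans_lt (ht (φ n).lt_succ_self)) (hσ _)
    (pwLinear_eq_of_mem_Icc σ ht.monotone ⟨ht.monotone (φ n).le_succ, le_rfl⟩)

def alternatingSlope (a b : ℝ) (n : ℕ) : ℝ := if Even n then a else b

lemma alternatingSlope_mem_Icc {a b : ℝ} (hab : a ≤ b) (n : ℕ) :
    alternatingSlope a b n ∈ Set.Icc a b := by
  by_cases h : Even n <;> simp [alternatingSlope, h, hab]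

lemma sset_pwLinear_alternatingSlope {a b : ℝ} (ha : 0 < a) (hab : a ≤ b) {t : ℕ → ℝ}
    (ht : StrictMono t) (ht0 : t 0 = 0) (htop : Tendsto t atTop atTop)
    (hratio : Tendsto (fun n => t n / t (n + 1)) atTop (𝓝 0)) :
    Sset (pwLinear t (alternatingSlope a b)) = Set.Icc a b := by
  have hσ := alternatingSlope_mem_Icc hab
  have hg := slopeBounded_pwLinear _ ht.monotone ht0 htop hσ
  have hg0 : pwLinear t (alternatingSlope a b) 0 = 0 := pwLinear_zero _ ht.monotone ht0
  have hodd : Tendsto (fun n => 2 * n + 1) atTop atTop :=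
    tendsto_atTop_mono (fun n => show n ≤ 2 * n + 1 by omega) tendsto_id
  refine (hg.sset_subset hg0).antisymm (Icc_subset_sset (hg.continuousOn ha.le)
    (fun n => ht0 ▸ ht (2 * n).succ_pos) (fun n => ht.monotone (2 * n + 1).le_succ)
    (htop.comp hodd) ?_ ?_)
  · exact tendsto_pwLinear_div_of_slope_eq ht ht0 htop hσ hratio
      (tendsto_atTop_mono (fun n => show n ≤ 2 * n by omega) tendsto_id)
      (fun n => by simp [alternatingSlope])
  · exact tendsto_pwLinear_div_of_slope_eq ht ht0 htop hσ hratio hodd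
      (fun n => by simp [alternatingSlope])

def fastBreakpoint (n : ℕ) : ℝ := n * n.factorial

lemma fastBreakpoint_zero : fastBreakpoint 0 = 0 := by simp [fastBreakpoint]

lemma fastBreakpoint_succ (n : ℕ) :
    fastBreakpoint (n + 1) = (n + 1) * (n + 1) * n.factorial := by
  simp only [fastBreakpoint, Nat.factorial_succ]
  push_cast
  ring

lemma strictMono_fastBreakpoint : StrictMono fastBreakpoint := by
  refine strictMono_nat_of_lt_succ fun n => ?_
  have hfac : (0 : ℝ) < n.factorial := by exact_mod_cast n.factorial_pos
  rw [fastBreakpoint_succ, fastBreakpoint]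
  nlinarith [mul_pos hfac (by positivity : (0 : ℝ) < n * n + n + 1)]

lemma tendsto_fastBreakpoint_atTop : Tendsto fastBreakpoint atTop atTop := by
  refine tendsto_atTop_mono (fun n => ?_) tendsto_natCast_atTop_atTop
  have hfac : (1 : ℝ) ≤ n.factorial := by exact_mod_cast n.factorial_pos
  exact le_mul_of_one_le_right n.cast_nonneg hfac

lemma tendsto_fastBreakpoint_div_succ :
    Tendsto (fun n => fastBreakpoint n / fastBreakpoint (n + 1)) atTop (𝓝 0) := by
  refine squeeze_zero (fun n => ?_) (fun n => ?_) tendsto_one_div_add_atTop_nhds_zero_nat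
  · unfold fastBreakpoint
    positivity
  · have hfac : (0 : ℝ) < n.factorial := by exact_mod_cast n.factorial_pos
    rw [div_le_div_iff₀ (by rw [fastBreakpoint_succ]; positivity) (by positivity),
      fastBreakpoint_succ, fastBreakpoint]
    nlinarith [(n.cast_nonneg : (0 : ℝ) ≤ n)]

/-- every compact subinterval `[a,b]` of `(0,∞)` is realized as `S_g` for
some continuous, strictly increasing, piecewise-linear quasi-isometry `g` of `[0,∞)`. -/
theorem stmt2 (a b : ℝ) (ha : 0 < a) (hab : a ≤ b) :
    ∃ g : ℝ → ℝ, ContinuousOn g (Set.Ici 0) ∧ StrictMonoOn g (Set.Ici 0) ∧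
      IsPL g ∧ IsQI g ∧ Sset g = Set.Icc a b := by
  have ht := strictMono_fastBreakpoint
  have hσ := alternatingSlope_mem_Icc hab
  have hg := slopeBounded_pwLinear _ ht.monotone fastBreakpoint_zero
    tendsto_fastBreakpoint_atTop hσ
  have hg0 : pwLinear fastBreakpoint (alternatingSlope a b) 0 = 0 :=
    pwLinear_zero _ ht.monotone fastBreakpoint_zero
  refine ⟨pwLinear fastBreakpoint (alternatingSlope a b), hg.continuousOn ha.le,
    hg.strictMonoOn ha, ?_, hg.isQI ha hg0,
    sset_pwLinear_alternatingSlope ha hab ht fastBreakpoint_zero tendsto_fastBreakpoint_atTop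
      tendsto_fastBreakpoint_div_succ⟩
  exact ⟨fastBreakpoint, fastBreakpoint_zero, ht, tendsto_fastBreakpoint_atTop, fun n =>
    ⟨alternatingSlope a b n, fun x hx => pwLinear_eq_of_mem_Icc _ ht.monotone hx⟩⟩
end

section
/- Let M ≥ 1 and let f, g be continuous quasi-isometries of [0,∞) with S_f = S_g = [1,M], where in addition g is a strictly increasing homeomorphism of [0,∞). Then f and g are H-equivalent if and only if for every ε > 0 there exists M' > 0 such that |f(x)/x − g(x)/x| < ε for all x > M' (equivalently, (f(x) − g(x))/x → 0 as x → ∞). -/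
open Filter Topology

/-! A quasi-isometry `g` grows linearly, `g x ≍ x`, so `(f x - g x) / x → 0` says exactly that
`f ~ g`. If `f` is boundedly close to `h ∘ g` with `h y ~ y`, then `f ~ h ∘ g ~ g` because
`g → ∞`. Conversely, if `f ~ g`, then `h = f ∘ g⁻¹` is a quasi-isometry (inverses and
composites of quasi-isometries are quasi-isometries), `h y ~ g (g⁻¹ y) = y`, and `f = h ∘ g`
on `[0,∞)`. -/

open Asymptotics Set

lemma IsQI.comp {f k : ℝ → ℝ} (hf : IsQI f) (hk : IsQI k) : IsQI (f ∘ k) := by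
  obtain ⟨hf0, ⟨A, hA1, hA⟩, ⟨A', hA'0, hA'⟩⟩ := hf
  obtain ⟨hk0, ⟨B, hB1, hB⟩, ⟨B', hB'0, hB'⟩⟩ := hk
  refine ⟨fun x hx => hf0 _ (hk0 x hx), ⟨A * B + A + B, by nlinarith, fun x y hx hy => ?_⟩,
    ⟨A * B' + A + A', by positivity, fun z hz => ?_⟩⟩
  · obtain ⟨hf_lo, hf_up⟩ := hA _ _ (hk0 x hx) (hk0 y hy)
    obtain ⟨hk_lo, hk_up⟩ := hB x y hx hy
    have hAB : 1 / (A * B + A + B) ≤ 1 / A * (1 / B) := by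
      rw [one_div_mul_one_div]
      exact one_div_le_one_div_of_le (by positivity) (by linarith)
    have hBA : 1 / A * B ≤ B := by
      rw [one_div_mul_eq_div]; exact div_le_self (by linarith) hA1.le
    constructor
    · calc 1 / (A * B + A + B) * |x - y| - (A * B + A + B)
          ≤ 1 / A * (1 / B * |x - y| - B) - A := by
            nlinarith [mul_le_mul_of_nonneg_right hAB (abs_nonneg (x - y)), hBA]
        _ ≤ 1 / A * |k x - k y| - A := by gcongr
        _ ≤ |(f ∘ k) x - (f ∘ k) y| := hf_lo
    · calc |(f ∘ k) x - (f ∘ k) y| ≤ A * |k x - k y| + A := hf_up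
        _ ≤ A * (B * |x - y| + B) + A := by gcongr
        _ ≤ (A * B + A + B) * |x - y| + (A * B + A + B) := by
            nlinarith [abs_nonneg (x - y)]
  · obtain ⟨x, hx, hfx⟩ := hA' z hz
    obtain ⟨y, hy, hky⟩ := hB' x hx
    refine ⟨y, hy, ?_⟩
    calc |(f ∘ k) y - z| ≤ |f (k y) - f x| + |f x - z| := abs_sub_le _ _ _
      _ ≤ (A * |k y - x| + A) + A' := add_le_add (hA _ _ (hk0 y hy) hx).2 hfx
      _ ≤ A * B' + A + A' := by gcongr

lemma IsQI.of_invOn {g g' : ℝ → ℝ} (hg : IsQI g) (hinv : InvOn g' g (Ici 0) (Ici 0))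
    (hmaps : MapsTo g' (Ici 0) (Ici 0)) : IsQI g' := by
  obtain ⟨hg0, ⟨K, hK1, hK⟩, -⟩ := hg
  have hK0 : 0 < K := by linarith
  refine ⟨fun y hy => hmaps hy, ⟨K ^ 2, by nlinarith, fun u v hu hv => ?_⟩,
    ⟨1, one_pos, fun z hz => ⟨g z, hg0 z hz, by simp [hinv.1 hz]⟩⟩⟩
  obtain ⟨hlo, hup⟩ := hK (g' u) (g' v) (hmaps hu) (hmaps hv)
  rw [hinv.2 hu, hinv.2 hv] at hlo hup
  have hKK : K ≤ K ^ 2 := by nlinarith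
  have hcK : 1 / K * K = 1 := one_div_mul_cancel hK0.ne'
  have hc1 : 1 / K ≤ 1 := by rw [div_le_one hK0]; exact hK1.le
  constructor
  · calc 1 / K ^ 2 * |u - v| - K ^ 2 ≤ 1 / K * (1 / K * (K * |g' u - g' v| + K)) - 1 := by
          rw [pow_two, ← one_div_mul_one_div]
          nlinarith [mul_le_mul_of_nonneg_left hup (by positivity : 0 ≤ 1 / K * (1 / K))]
      _ = 1 / K * |g' u - g' v| + 1 / K - 1 := by
          rw [mul_add, ← mul_assoc, hcK, one_mul, mul_add, mul_one]
      _ ≤ |g' u - g' v| := by nlinarith [abs_nonneg (g' u - g' v)]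
  · calc |g' u - g' v| = K * (1 / K * |g' u - g' v| - K) + K ^ 2 := by
          rw [mul_sub, ← mul_assoc, mul_one_div_cancel hK0.ne', one_mul]; ring
      _ ≤ K * |u - v| + K ^ 2 := by gcongr
      _ ≤ K ^ 2 * |u - v| + K ^ 2 := by gcongr

lemma tendsto_atTop_of_monotoneOn_of_surjOn {g : ℝ → ℝ} (hm : MonotoneOn g (Ici 0))
    (hs : SurjOn g (Ici 0) (Ici 0)) : Tendsto g atTop atTop := by
  refine tendsto_atTop_atTop.2 fun N => ?_
  obtain ⟨a, ha, hga⟩ := hs (le_max_right N 0 : (0:ℝ) ≤ max N 0)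
  refine ⟨a, fun x hx => ?_⟩
  calc N ≤ max N 0 := le_max_left N 0
    _ = g a := hga.symm
    _ ≤ g x := hm ha (mem_Ici.2 (le_trans (mem_Ici.1 ha) hx)) hx

lemma IsQI.isTheta_id {g : ℝ → ℝ} (hg : IsQI g) : g =Θ[atTop] id := by
  obtain ⟨-, ⟨K, hK1, hK⟩, -⟩ := hg
  have hK0 : 0 < K := by linarith
  constructor
  · refine IsBigO.of_bound (|g 0| + 2 * K) ?_
    filter_upwards [eventually_ge_atTop 1] with x hx
    have hup := (hK x 0 (by linarith) le_rfl).2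
    rw [sub_zero, abs_of_nonneg (by linarith : 0 ≤ x)] at hup
    rw [Real.norm_eq_abs, Real.norm_eq_abs, id, abs_of_nonneg (by linarith : 0 ≤ x)]
    nlinarith [abs_sub_abs_le_abs_sub (g x) (g 0), abs_nonneg (g 0)]
  · refine IsBigO.of_bound (2 * K) ?_
    filter_upwards [eventually_ge_atTop (2 * (K * |g 0| + K ^ 2)), eventually_ge_atTop 0]
      with x hx hx0
    have hlo := (hK x 0 hx0 le_rfl).1
    rw [sub_zero, abs_of_nonneg hx0] at hlo
    have hx_le : x ≤ K * |g x - g 0| + K ^ 2 := by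
      have := mul_le_mul_of_nonneg_left hlo hK0.le
      rwa [mul_sub, ← mul_assoc, mul_one_div_cancel hK0.ne', one_mul, ← pow_two,
        sub_le_iff_le_add] at this
    rw [Real.norm_eq_abs, Real.norm_eq_abs, id, abs_of_nonneg hx0]
    nlinarith [abs_sub (g x) (g 0)]

lemma tendsto_sub_div_iff_isEquivalent {f g : ℝ → ℝ} (hg : g =Θ[atTop] id) :
    Tendsto (fun x => (f x - g x) / x) atTop (𝓝 0) ↔ f ~[atTop] g := by
  rw [IsEquivalent, hg.isLittleO_congr_right, isLittleO_iff_tendsto']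
  · rfl
  · filter_upwards [eventually_ne_atTop 0] with x hx h
    exact absurd h hx

lemma isEquivalent_id_iff_tendsto_div {h : ℝ → ℝ} :
    h ~[atTop] id ↔ Tendsto (fun y => h y / y) atTop (𝓝 1) :=
  isEquivalent_iff_tendsto_one (eventually_ne_atTop 0)

lemma HEquiv.isEquivalent {f g : ℝ → ℝ} (hfg : HEquiv f g) (hg : Tendsto g atTop atTop) :
    f ~[atTop] g := by
  obtain ⟨h, -, hh, C, hC⟩ := hfg
  have hhg : (h ∘ g) ~[atTop] g := (isEquivalent_id_iff_tendsto_div.2 hh).comp_tendsto hg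
  have hbdd : (f - h ∘ g) =O[atTop] fun _ => (1 : ℝ) :=
    IsBigO.of_bound C <| by
      filter_upwards [eventually_ge_atTop 0] with x hx
      simpa using hC x hx
  have hsmall : (fun _ => (1 : ℝ)) =o[atTop] g :=
    isLittleO_const_left.2 (Or.inr (tendsto_norm_atTop_atTop.comp hg))
  have hfhg : f ~[atTop] (h ∘ g) := (hbdd.trans_isLittleO hsmall).trans_isBigO hhg.symm.isBigO
  exact hfhg.trans hhg

lemma HEquiv.of_isEquivalent {f g : ℝ → ℝ} (hfg : f ~[atTop] g) (hf : IsQI f) (hg : IsQI g)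
    (hgm : StrictMonoOn g (Ici 0)) (hgbij : BijOn g (Ici 0) (Ici 0)) : HEquiv f g := by
  set g' := Function.invFunOn g (Ici 0)
  have hinv : InvOn g' g (Ici 0) (Ici 0) := hgbij.invOn_invFunOn
  have hg'bij : BijOn g' (Ici 0) (Ici 0) := hgbij.symm hinv.symm
  have hg'm : MonotoneOn g' (Ici 0) := fun u hu v hv huv => by
    rwa [← hgm.le_iff_le (hg'bij.mapsTo hu) (hg'bij.mapsTo hv), hinv.2 hu, hinv.2 hv]
  have hg'top := tendsto_atTop_of_monotoneOn_of_surjOn hg'm hg'bij.surjOn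
  refine ⟨f ∘ g', hf.comp (hg.of_invOn hinv hg'bij.mapsTo), ?_, 0, fun x hx => ?_⟩
  · refine isEquivalent_id_iff_tendsto_div.1 ((hfg.comp_tendsto hg'top).congr_right ?_)
    filter_upwards [eventually_ge_atTop 0] with y hy
    exact hinv.2 hy
  · simp [hinv.1 hx]

theorem stmt3_general (f g : ℝ → ℝ) (hf : IsQI f) (hg : IsQI g)
    (hgm : StrictMonoOn g (Set.Ici 0)) (hgbij : Set.BijOn g (Set.Ici 0) (Set.Ici 0)) :
    HEquiv f g ↔ Tendsto (fun x => (f x - g x) / x) atTop (𝓝 0) := by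
  have hg_top := tendsto_atTop_of_monotoneOn_of_surjOn hgm.monotoneOn hgbij.surjOn
  rw [tendsto_sub_div_iff_isEquivalent hg.isTheta_id]
  exact ⟨fun h => h.isEquivalent hg_top, fun h => HEquiv.of_isEquivalent h hf hg hgm hgbij⟩

/-- for `f, g` continuous quasi-isometries with `S_f = S_g = [1,M]` and `g`
a strictly increasing homeomorphism of `[0,∞)`, `f` and `g` are H-equivalent iff
`(f x - g x)/x → 0` as `x → ∞`. -/
theorem stmt3 (M : ℝ) (hM : 1 ≤ M) (f g : ℝ → ℝ) (hf : IsQI f) (hg : IsQI g)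
    (hfc : ContinuousOn f (Set.Ici 0)) (hgc : ContinuousOn g (Set.Ici 0))
    (hSf : Sset f = Set.Icc 1 M) (hSg : Sset g = Set.Icc 1 M)
    (hgm : StrictMonoOn g (Set.Ici 0)) (hgbij : Set.BijOn g (Set.Ici 0) (Set.Ici 0)) :
    HEquiv f g ↔ Tendsto (fun x => (f x - g x) / x) atTop (𝓝 0) :=
  stmt3_general f g hf hg hgm hgbij
end

section
/- Let f, g : [0,∞) → [0,∞) be quasi-isometries and let (a_n) be a strictly increasing sequence tending to ∞ with f(a_n)/a_n → 1 and g(a_n)/a_n → 1. Suppose that for each n there is a partition a_n = x_{n,0} < x_{n,1} < ⋯ < x_{n,r_n} = a_{n+1} such that f and g are both affine on each interval [x_{n,i−1}, x_{n,i}], with slopes λ_{n,i} and λ'_{n,i} respectively. If max_{1≤i≤r_n} |λ_{n,i} − λ'_{n,i}| → 0 as n → ∞, then (f(x) − g(x))/x → 0 as x → ∞ (so by the equivalence criterion, f and g represent the same class modulo H). -/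
/-!
On the block `[aₙ, aₙ₊₁]` the difference `D = f - g` is piecewise affine with slopes
`λₙᵢ - λ'ₙᵢ`, so it moves by at most `εₙ · (t - aₙ)` there, where `εₙ = maxᵢ |λₙᵢ - λ'ₙᵢ| → 0`.
Together with `|D(aₙ)| = o(aₙ)` this gives `|D t| ≤ ε t` on all late blocks, which cover a
neighbourhood of `∞`.
-/

open Filter Topology

open Set

lemma abs_sub_le_mul_of_chain {h : ℝ → ℝ} {ε : ℝ} (r : ℕ) {x : ℕ → ℝ}
    (hx : ∀ i < r, x i ≤ x (i + 1))
    (hpiece : ∀ i < r, ∀ t ∈ Icc (x i) (x (i + 1)), |h t - h (x i)| ≤ ε * (t - x i)) :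
    ∀ t ∈ Icc (x 0) (x r), |h t - h (x 0)| ≤ ε * (t - x 0) := by
  induction r generalizing x with
  | zero =>
    intro t ht
    simp [le_antisymm ht.2 ht.1]
  | succ r ih =>
    intro t ht
    by_cases ht1 : t ≤ x 1
    · exact hpiece 0 r.succ_pos t ⟨ht.1, ht1⟩
    · have htail := ih (x := fun i => x (i + 1)) (fun i hi => hx (i + 1) (by omega))
        (fun i hi => hpiece (i + 1) (by omega)) t ⟨(not_le.1 ht1).le, ht.2⟩
      have hfirst := hpiece 0 r.succ_pos (x 1) ⟨hx 0 r.succ_pos, le_rfl⟩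
      calc |h t - h (x 0)| ≤ |h t - h (x 1)| + |h (x 1) - h (x 0)| := abs_sub_le _ _ _
        _ ≤ ε * (t - x 1) + ε * (x 1 - x 0) := add_le_add htail hfirst
        _ = ε * (t - x 0) := by ring

lemma StrictMono.eventually_atTop_of_eventually_Icc {β : Type*} [LinearOrder β] [NoMaxOrder β]
    {a : ℕ → β} (ha : StrictMono a) (hatop : Tendsto a atTop atTop) {p : β → Prop}
    (hp : ∀ᶠ n in atTop, ∀ t ∈ Icc (a n) (a (n + 1)), p t) : ∀ᶠ t in atTop, p t := by
  obtain ⟨N, hN⟩ := eventually_atTop.1 hp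
  have hshift : StrictMono fun n => a (n + N) := fun i j hij => ha (by omega)
  filter_upwards [eventually_gt_atTop (a N)] with t ht
  obtain ⟨n, hlo, hhi⟩ := hshift.exists_between_of_tendsto_atTop
    (hatop.comp (tendsto_add_atTop_nat N)) (by simpa using ht)
  exact hN (n + N) (by omega) t ⟨hlo.le, by simpa [Nat.add_right_comm] using hhi⟩

lemma tendsto_div_nhds_zero_of_blocks {D : ℝ → ℝ} {a : ℕ → ℝ} (ha : StrictMono a)
    (hatop : Tendsto a atTop atTop) (hDa : Tendsto (fun n => D (a n) / a n) atTop (𝓝 0))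
    (hblock : ∀ ε > 0, ∀ᶠ n in atTop,
      ∀ t ∈ Icc (a n) (a (n + 1)), |D t - D (a n)| ≤ ε * (t - a n)) :
    Tendsto (fun t => D t / t) atTop (𝓝 0) := by
  refine (Asymptotics.isLittleO_iff.2 fun ε hε => ?_).tendsto_div_nhds_zero (g := id)
  refine ha.eventually_atTop_of_eventually_Icc hatop ?_
  have hsmall : ∀ᶠ n in atTop, |D (a n)| / |a n| < ε := by
    simpa using (Metric.tendsto_nhds.1 hDa) ε hε
  filter_upwards [hsmall, hblock ε hε, hatop.eventually_gt_atTop 0] with n hn hincr hpos t ht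
  have hDan : |D (a n)| ≤ ε * a n := by
    rw [abs_of_pos hpos, div_lt_iff₀ hpos] at hn
    exact hn.le
  calc ‖D t‖ ≤ |D (a n)| + |D t - D (a n)| := by
        simpa using abs_add_le (D (a n)) (D t - D (a n))
    _ ≤ ε * a n + ε * (t - a n) := add_le_add hDan (hincr t ht)
    _ = ε * ‖id t‖ := by
        rw [id, Real.norm_of_nonneg (hpos.le.trans ht.1)]
        ring

theorem stmt4_general (f g : ℝ → ℝ)
    (a : ℕ → ℝ) (ha : StrictMono a) (hatop : Tendsto a atTop atTop)
    (hfa : Tendsto (fun n => f (a n) / a n) atTop (𝓝 1))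
    (hga : Tendsto (fun n => g (a n) / a n) atTop (𝓝 1))
    (r : ℕ → ℕ)
    (x : ℕ → ℕ → ℝ) (hx0 : ∀ n, x n 0 = a n) (hxr : ∀ n, x n (r n) = a (n + 1))
    (hxmono : ∀ n, ∀ i < r n, x n i < x n (i + 1))
    (lam lam' : ℕ → ℕ → ℝ)
    (hflam : ∀ n, ∀ i < r n, ∀ t ∈ Set.Icc (x n i) (x n (i + 1)),
      f t = f (x n i) + lam n i * (t - x n i))
    (hglam : ∀ n, ∀ i < r n, ∀ t ∈ Set.Icc (x n i) (x n (i + 1)),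
      g t = g (x n i) + lam' n i * (t - x n i))
    (hconv : ∀ ε : ℝ, 0 < ε → ∃ N : ℕ, ∀ n ≥ N, ∀ i < r n, |lam n i - lam' n i| < ε) :
    Tendsto (fun t => (f t - g t) / t) atTop (𝓝 0) := by
  have hDa : Tendsto (fun n => (f (a n) - g (a n)) / a n) atTop (𝓝 0) := by
    simpa [sub_div] using hfa.sub hga
  refine tendsto_div_nhds_zero_of_blocks (D := fun t => f t - g t) ha hatop hDa fun ε hε => ?_
  obtain ⟨N, hN⟩ := hconv ε hε
  filter_upwards [eventually_ge_atTop N] with n hn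
  rw [← hx0, ← hxr]
  refine abs_sub_le_mul_of_chain (r n) (fun i hi => (hxmono n i hi).le) fun i hi t ht => ?_
  have hslope : f t - g t - (f (x n i) - g (x n i)) = (lam n i - lam' n i) * (t - x n i) := by
    rw [hflam n i hi t ht, hglam n i hi t ht]
    ring
  rw [hslope, abs_mul, abs_of_nonneg (sub_nonneg.2 ht.1)]
  exact mul_le_mul_of_nonneg_right (hN n hn i hi).le (sub_nonneg.2 ht.1)

/-- with `f(aₙ)/aₙ → 1`, `g(aₙ)/aₙ → 1`, and common partitions of
`[aₙ, aₙ₊₁]` on whose pieces `f, g` are affine with slopes `λₙᵢ`, `λ'ₙᵢ`, if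
`maxᵢ |λₙᵢ - λ'ₙᵢ| → 0` then `(f x - g x)/x → 0`. -/
theorem stmt4 (f g : ℝ → ℝ) (hf : IsQI f) (hg : IsQI g)
    (a : ℕ → ℝ) (ha : StrictMono a) (hatop : Tendsto a atTop atTop)
    (hfa : Tendsto (fun n => f (a n) / a n) atTop (𝓝 1))
    (hga : Tendsto (fun n => g (a n) / a n) atTop (𝓝 1))
    (r : ℕ → ℕ) (hr : ∀ n, 1 ≤ r n)
    (x : ℕ → ℕ → ℝ) (hx0 : ∀ n, x n 0 = a n) (hxr : ∀ n, x n (r n) = a (n + 1))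
    (hxmono : ∀ n, ∀ i < r n, x n i < x n (i + 1))
    (lam lam' : ℕ → ℕ → ℝ)
    (hflam : ∀ n, ∀ i < r n, ∀ t ∈ Set.Icc (x n i) (x n (i + 1)),
      f t = f (x n i) + lam n i * (t - x n i))
    (hglam : ∀ n, ∀ i < r n, ∀ t ∈ Set.Icc (x n i) (x n (i + 1)),
      g t = g (x n i) + lam' n i * (t - x n i))
    (hconv : ∀ ε : ℝ, 0 < ε → ∃ N : ℕ, ∀ n ≥ N, ∀ i < r n, |lam n i - lam' n i| < ε) :
    Tendsto (fun t => (f t - g t) / t) atTop (𝓝 0) :=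
  stmt4_general f g a ha hatop hfa hga r x hx0 hxr hxmono lam lam' hflam hglam hconv
end

section
/- Let f, g : [0,∞) → [0,∞) be quasi-isometries and let (a_n) be a strictly increasing sequence tending to ∞ with a_1 > 0, f(a_n)/a_n → 1 and g(a_n)/a_n → 1. Suppose that for each n there is a partition a_n = x_{n,0} < x_{n,1} < ⋯ < x_{n,r_n} = a_{n+1} such that f and g are both affine on each interval [x_{n,i−1}, x_{n,i}], with slopes λ_{n,i} and λ'_{n,i} respectively. Assume there exists K₁ > 1 such that x_{n,i} > K₁·x_{n,i−1} for all n and all 1 ≤ i ≤ r_n, and assume (f(x) − g(x))/x → 0 as x → ∞. Then max_{1≤i≤r_n} |λ_{n,i} − λ'_{n,i}| → 0 as n → ∞. -/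
open Filter Topology

/- On a piece `[u, v]` of the partition the difference `f - g` is affine with slope
`λ - λ'`, so `|λ - λ'| (v - u) ≤ |(f - g) u| + |(f - g) v| = o(v)`. Geometric growth of the
partition points makes `v - u ≥ (1 - 1/K₁) v` comparable to `v`, hence `λ - λ' = o(1)`,
uniformly over the pieces beyond `a n` once `a n` is large. -/

theorem eventually_abs_le_mul_of_tendsto_div_zero {h : ℝ → ℝ}
    (hh : Tendsto (fun t => h t / t) atTop (𝓝 0)) {δ : ℝ} (hδ : 0 < δ) :
    ∀ᶠ t in atTop, |h t| ≤ δ * t := by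
  filter_upwards [hh.eventually (Metric.closedBall_mem_nhds 0 hδ), eventually_gt_atTop 0]
    with t ht ht0
  rwa [Real.dist_0_eq_abs, abs_div, abs_of_pos ht0, div_le_iff₀ ht0] at ht

theorem abs_slope_mul_le_of_abs_le_mul {h : ℝ → ℝ} {u v μ δ K : ℝ} (hK : 1 < K) (hδ : 0 < δ)
    (huv : u < v) (hKuv : K * u ≤ v) (hu : |h u| ≤ δ * u) (hv : |h v| ≤ δ * v)
    (hμ : h v = h u + μ * (v - u)) :
    |μ| * (K - 1) ≤ 2 * K * δ := by
  have hu0 : 0 ≤ u := nonneg_of_mul_nonneg_right ((abs_nonneg _).trans hu) hδ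
  have hv0 : 0 < v := hu0.trans_lt huv
  have hμuv : |μ| * (v - u) ≤ δ * (u + v) := by
    rw [← abs_of_pos (sub_pos.mpr huv), ← abs_mul,
      show μ * (v - u) = h v - h u by rw [hμ]; ring]
    linarith [abs_sub (h v) (h u)]
  refine le_of_mul_le_mul_right ?_ hv0
  calc |μ| * (K - 1) * v ≤ |μ| * (v - u) * K := by
        rw [mul_assoc, mul_assoc]
        exact mul_le_mul_of_nonneg_left (by linarith) (abs_nonneg μ)
    _ ≤ δ * (u + v) * K := mul_le_mul_of_nonneg_right hμuv (by linarith)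
    _ ≤ 2 * K * δ * v := by
        linarith [mul_nonneg (mul_nonneg hδ.le (by linarith : 0 ≤ K)) (sub_nonneg.mpr huv.le)]

theorem stmt5_general (f g : ℝ → ℝ)
    (a : ℕ → ℝ) (hatop : Tendsto a atTop atTop)
    (r : ℕ → ℕ)
    (x : ℕ → ℕ → ℝ) (hx0 : ∀ n, x n 0 = a n)
    (hxmono : ∀ n, ∀ i < r n, x n i < x n (i + 1))
    (lam lam' : ℕ → ℕ → ℝ)
    (hflam : ∀ n, ∀ i < r n, ∀ t ∈ Set.Icc (x n i) (x n (i + 1)),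
      f t = f (x n i) + lam n i * (t - x n i))
    (hglam : ∀ n, ∀ i < r n, ∀ t ∈ Set.Icc (x n i) (x n (i + 1)),
      g t = g (x n i) + lam' n i * (t - x n i))
    (K₁ : ℝ) (hK₁ : 1 < K₁) (hgeo : ∀ n, ∀ i < r n, K₁ * x n i < x n (i + 1))
    (hdiff : Tendsto (fun t => (f t - g t) / t) atTop (𝓝 0)) :
    ∀ ε : ℝ, 0 < ε → ∃ N : ℕ, ∀ n ≥ N, ∀ i < r n, |lam n i - lam' n i| < ε := by
  intro ε hε
  set δ := ε * (K₁ - 1) / (4 * K₁)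
  have hδ : 0 < δ := div_pos (mul_pos hε (sub_pos.mpr hK₁)) (by linarith)
  obtain ⟨T, hT⟩ := (eventually_abs_le_mul_of_tendsto_div_zero hdiff hδ).exists_forall_of_atTop
  obtain ⟨N, hN⟩ := eventually_atTop.mp (hatop.eventually_ge_atTop T)
  refine ⟨N, fun n hn i hi => ?_⟩
  have hxi : a n ≤ x n i := hx0 n ▸
    (strictMonoOn_Iic_of_lt_succ (hxmono n)).monotoneOn (Nat.zero_le _) hi.le (Nat.zero_le i)
  have huv := hxmono n i hi
  have hslope := abs_slope_mul_le_of_abs_le_mul (h := fun t => f t - g t) (μ := lam n i - lam' n i)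
    hK₁ hδ huv (hgeo n i hi).le (hT _ ((hN n hn).trans hxi))
    (hT _ ((hN n hn).trans (hxi.trans huv.le)))
    (by rw [hflam n i hi _ ⟨huv.le, le_rfl⟩, hglam n i hi _ ⟨huv.le, le_rfl⟩]; ring)
  have h2Kδ : 2 * K₁ * δ = ε * (K₁ - 1) / 2 := by
    simp only [δ]; field_simp; ring
  exact lt_of_mul_lt_mul_right (by linarith [mul_pos hε (sub_pos.mpr hK₁)]) (sub_pos.mpr hK₁).le

/-- conversely, if the partition points grow geometrically
(`xₙᵢ > K₁ xₙ,ᵢ₋₁` with `K₁ > 1`) and `(f x - g x)/x → 0`, then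
`maxᵢ |λₙᵢ - λ'ₙᵢ| → 0`. -/
theorem stmt5 (f g : ℝ → ℝ) (hf : IsQI f) (hg : IsQI g)
    (a : ℕ → ℝ) (ha0 : 0 < a 0) (ha : StrictMono a) (hatop : Tendsto a atTop atTop)
    (hfa : Tendsto (fun n => f (a n) / a n) atTop (𝓝 1))
    (hga : Tendsto (fun n => g (a n) / a n) atTop (𝓝 1))
    (r : ℕ → ℕ) (hr : ∀ n, 1 ≤ r n)
    (x : ℕ → ℕ → ℝ) (hx0 : ∀ n, x n 0 = a n) (hxr : ∀ n, x n (r n) = a (n + 1))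
    (hxmono : ∀ n, ∀ i < r n, x n i < x n (i + 1))
    (lam lam' : ℕ → ℕ → ℝ)
    (hflam : ∀ n, ∀ i < r n, ∀ t ∈ Set.Icc (x n i) (x n (i + 1)),
      f t = f (x n i) + lam n i * (t - x n i))
    (hglam : ∀ n, ∀ i < r n, ∀ t ∈ Set.Icc (x n i) (x n (i + 1)),
      g t = g (x n i) + lam' n i * (t - x n i))
    (K₁ : ℝ) (hK₁ : 1 < K₁) (hgeo : ∀ n, ∀ i < r n, K₁ * x n i < x n (i + 1))
    (hdiff : Tendsto (fun t => (f t - g t) / t) atTop (𝓝 0)) :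
    ∀ ε : ℝ, 0 < ε → ∃ N : ℕ, ∀ n ≥ N, ∀ i < r n, |lam n i - lam' n i| < ε :=
  stmt5_general f g a hatop r x hx0 hxmono lam lam' hflam hglam K₁ hK₁ hgeo hdiff
end

section
/- There exist continuous, strictly increasing, piecewise-linear quasi-isometries f, g : [0,∞) → [0,∞), a strictly increasing sequence (a_n) tending to ∞ with f(a_n)/a_n → 1 and g(a_n)/a_n → 1, and for each n a partition a_n = x_{n,0} < x_{n,1} < x_{n,2} = a_{n+1} on whose pieces both f and g are affine, such that (f(x) − g(x))/x → 0 as x → ∞ (so f and g agree modulo H), yet the maximal slope difference max_i |λ_{n,i} − λ'_{n,i}| ≥ 1/4 for every n; moreover sup_{x≥0} |f(x) − g(x)| = ∞. In particular, the geometric spacing hypothesis x_{n,i} > K₁·x_{n,i−1} in the converse direction of the slope-comparison theorem cannot be dropped. -/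
open Filter Topology

/-!
Take `g = id` and `f x = x + d(x)/2`, where `d` is the distance to the set of perfect squares.
On `[n², (n+1)²]` the function `d` is a tent, so `f` has slope `3/2` up to the midpoint and
`1/2` after it, while `g` has slope `1`. Since `d x ≤ 2√x + 1`, we get `(f - g)(x)/x → 0`, but
`f - g` equals `(n + 1/2)/2` at the midpoints, so it is unbounded. The partition points `n²` grow
only polynomially, so no geometric spacing `x_{n,i} > K₁ x_{n,i-1}` holds.
-/

open Set Metric

section Bilipschitz

variable {g : ℝ → ℝ} {c C : ℝ}

theorem isQI_of_sub_bounds (hc : 0 < c) (hg0 : g 0 = 0) (hcont : ContinuousOn g (Ici 0))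
    (hg : ∀ x y, 0 ≤ x → x ≤ y → c * (y - x) ≤ g y - g x ∧ g y - g x ≤ C * (y - x)) :
    IsQI g := by
  set K := max C c⁻¹ + 1 with hK_def
  have hK1 : 1 < K := by linarith [le_max_right C c⁻¹, inv_pos.2 hc]
  have hcK : c⁻¹ ≤ K := by linarith [le_max_right C c⁻¹]
  have hKc : 1 / K ≤ c := by rw [one_div]; exact inv_le_of_inv_le₀ hc hcK
  have hCK : C ≤ K := by linarith [le_max_left C c⁻¹]
  have ordered : ∀ x y, 0 ≤ x → x ≤ y →
      1 / K * |y - x| - K ≤ |g y - g x| ∧ |g y - g x| ≤ K * |y - x| + K := by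
    intro x y hx hxy
    obtain ⟨hlow, hup⟩ := hg x y hx hxy
    have hyx : 0 ≤ y - x := sub_nonneg.2 hxy
    have hK : 0 < K := lt_of_lt_of_le (inv_pos.2 hc) hcK
    rw [abs_of_nonneg hyx, abs_of_nonneg (le_trans (by positivity) hlow)]
    constructor <;> nlinarith
  refine ⟨fun x hx => ?_, ⟨K, hK1, fun x y hx hy => ?_⟩,
    ⟨1, one_pos, fun z hz => ?_⟩⟩
  · have := (hg 0 x le_rfl hx).1
    rw [hg0, sub_zero, sub_zero] at this
    exact le_trans (by positivity) this
  · rcases le_total x y with hxy | hyx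
    · rw [abs_sub_comm x y, abs_sub_comm (g x) (g y)]
      exact ordered x y hx hxy
    · exact ordered y x hy hyx
  · have hzc : 0 ≤ z / c := div_nonneg hz hc.le
    have hreach : z ∈ Icc (g 0) (g (z / c)) := by
      have := (hg 0 (z / c) le_rfl hzc).1
      rw [hg0, sub_zero, sub_zero, mul_div_cancel₀ z hc.ne'] at this
      exact ⟨by rw [hg0]; exact hz, this⟩
    obtain ⟨x, hx, hgx⟩ :=
      intermediate_value_Icc hzc (hcont.mono fun t ht => ht.1) hreach
    exact ⟨x, hx.1, by simp [hgx]⟩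

theorem strictMonoOn_of_sub_lower_bound (hc : 0 < c)
    (hg : ∀ x y, 0 ≤ x → x ≤ y → c * (y - x) ≤ g y - g x) : StrictMonoOn g (Ici 0) := by
  intro x hx y _ hxy
  have := hg x y hx hxy.le
  nlinarith

end Bilipschitz

theorem isPL_of_twoPiece {f : ℝ → ℝ} {a : ℕ → ℝ} {x : ℕ → ℕ → ℝ} {lam : ℕ → ℕ → ℝ}
    (ha0 : a 0 = 0) (ha : Tendsto a atTop atTop)
    (hx : ∀ n, x n 0 = a n ∧ x n 0 < x n 1 ∧ x n 1 < x n 2 ∧ x n 2 = a (n + 1))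
    (hf : ∀ n, ∀ i < 2, ∀ t ∈ Icc (x n i) (x n (i + 1)),
      f t = f (x n i) + lam n i * (t - x n i)) :
    IsPL f := by
  set u : ℕ → ℝ := fun k => x (k / 2) (k % 2)
  have u_even : ∀ m, u (2 * m) = x m 0 := fun m => by
    simp only [u, show 2 * m / 2 = m by omega, show 2 * m % 2 = 0 by omega]
  have u_odd : ∀ m, u (2 * m + 1) = x m 1 := fun m => by
    simp only [u, show (2 * m + 1) / 2 = m by omega, show (2 * m + 1) % 2 = 1 by omega]
  have u_next_odd : ∀ m, u (2 * m + 1 + 1) = x m 2 := fun m => by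
    rw [show 2 * m + 1 + 1 = 2 * (m + 1) by ring, u_even, (hx (m + 1)).1, (hx m).2.2.2]
  refine ⟨u, (u_even 0).trans ((hx 0).1.trans ha0), strictMono_nat_of_lt_succ fun k => ?_, ?_,
    fun k => ?_⟩
  · obtain ⟨m, rfl | rfl⟩ := Nat.even_or_odd' k
    · rw [u_even, u_odd]; exact (hx m).2.1
    · rw [u_odd, u_next_odd]; exact (hx m).2.2.1
  · refine tendsto_atTop_mono (fun k => ?_) (ha.comp (Nat.tendsto_div_const_atTop two_ne_zero))
    obtain ⟨m, rfl | rfl⟩ := Nat.even_or_odd' k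
    · simp only [Function.comp, u_even, (hx m).1, show 2 * m / 2 = m by omega, le_rfl]
    · simp only [Function.comp, u_odd, show (2 * m + 1) / 2 = m by omega, ← (hx m).1]
      exact (hx m).2.1.le
  · obtain ⟨m, rfl | rfl⟩ := Nat.even_or_odd' k
    · exact ⟨lam m 0, by rw [u_even, u_odd]; exact hf m 0 two_pos⟩
    · exact ⟨lam m 1, by rw [u_odd, u_next_odd]; exact hf m 1 one_lt_two⟩

theorem tendsto_comp_div_self_of_fixed {h : ℝ → ℝ} {a : ℕ → ℝ} (ha : Tendsto a atTop atTop)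
    (hfix : ∀ n, h (a n) = a n) : Tendsto (fun n => h (a n) / a n) atTop (𝓝 1) := by
  refine tendsto_const_nhds.congr' ?_
  filter_upwards [ha.eventually_gt_atTop 0] with n hn
  rw [hfix, div_self hn.ne']

theorem infDist_eq_min_of_gap {s : Set ℝ} {a b x : ℝ} (ha : a ∈ s) (hb : b ∈ s)
    (hgap : ∀ y ∈ s, y ≤ a ∨ b ≤ y) (hx : x ∈ Icc a b) :
    infDist x s = min (x - a) (b - x) := by
  obtain ⟨hax, hxb⟩ := hx
  apply le_antisymm
  · refine le_min ?_ ?_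
    · simpa [Real.dist_eq, abs_of_nonneg (sub_nonneg.2 hax)] using infDist_le_dist_of_mem (x := x) ha
    · simpa [Real.dist_eq, abs_of_nonpos (sub_nonpos.2 hxb)] using infDist_le_dist_of_mem (x := x) hb
  · refine (le_infDist ⟨a, ha⟩).2 fun y hy => ?_
    rw [Real.dist_eq]
    rcases hgap y hy with hya | hby
    · exact (min_le_left _ _).trans (by rw [abs_of_nonneg (by linarith)]; linarith)
    · exact (min_le_right _ _).trans (by rw [abs_of_nonpos (by linarith)]; linarith)

namespace SquaresZigzag

def squares : Set ℝ := range fun n : ℕ => (n : ℝ) ^ 2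

noncomputable def distSquares (x : ℝ) : ℝ := infDist x squares

noncomputable def zigzag (x : ℝ) : ℝ := x + distSquares x / 2

noncomputable def breakpoint (n : ℕ) : ℕ → ℝ
  | 0 => (n : ℝ) ^ 2
  | 1 => (n : ℝ) ^ 2 + n + 1 / 2
  | _ => ((n : ℝ) + 1) ^ 2

noncomputable def zigzagSlope : ℕ → ℝ
  | 0 => 3 / 2
  | _ => 1 / 2

theorem sq_mem_squares (n : ℕ) : (n : ℝ) ^ 2 ∈ squares := ⟨n, rfl⟩

theorem succ_sq_mem_squares (n : ℕ) : ((n : ℝ) + 1) ^ 2 ∈ squares := ⟨n + 1, by push_cast; rfl⟩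

theorem distSquares_eq {n : ℕ} {x : ℝ} (hx : x ∈ Icc ((n : ℝ) ^ 2) (((n : ℝ) + 1) ^ 2)) :
    distSquares x = min (x - (n : ℝ) ^ 2) (((n : ℝ) + 1) ^ 2 - x) := by
  refine infDist_eq_min_of_gap (sq_mem_squares n) (succ_sq_mem_squares n) ?_ hx
  rintro _ ⟨m, rfl⟩
  rcases le_or_gt m n with hmn | hmn
  · exact .inl (pow_le_pow_left₀ (Nat.cast_nonneg m) (Nat.cast_le.2 hmn) 2)
  · have : (n : ℝ) + 1 ≤ m := by exact_mod_cast hmn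
    exact .inr (pow_le_pow_left₀ (by positivity) this 2)

theorem distSquares_le {x : ℝ} (hx : 0 ≤ x) : distSquares x ≤ 2 * √x + 1 := by
  set n := ⌊√x⌋₊
  have hn : (n : ℝ) ≤ √x := Nat.floor_le (Real.sqrt_nonneg x)
  have hn' : √x < n + 1 := Nat.lt_floor_add_one _
  have hsq : √x ^ 2 = x := Real.sq_sqrt hx
  have hnx : (n : ℝ) ^ 2 ≤ x := hsq ▸ pow_le_pow_left₀ (Nat.cast_nonneg n) hn 2
  calc distSquares x ≤ x - (n : ℝ) ^ 2 := by
        simpa [distSquares, Real.dist_eq, abs_of_nonneg (sub_nonneg.2 hnx)] using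
          infDist_le_dist_of_mem (x := x) (sq_mem_squares n)
    _ ≤ 2 * √x + 1 := by nlinarith

theorem zigzag_sq (n : ℕ) : zigzag ((n : ℝ) ^ 2) = (n : ℝ) ^ 2 := by
  simp [zigzag, distSquares, infDist_zero_of_mem (sq_mem_squares n)]

theorem continuous_zigzag : Continuous zigzag :=
  continuous_id.add ((continuous_infDist_pt squares).div_const 2)

theorem zigzag_sub_bounds (x y : ℝ) (hxy : x ≤ y) :
    1 / 2 * (y - x) ≤ zigzag y - zigzag x ∧ zigzag y - zigzag x ≤ 3 / 2 * (y - x) := by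
  have h₁ := infDist_le_infDist_add_dist (x := x) (y := y) (s := squares)
  have h₂ := infDist_le_infDist_add_dist (x := y) (y := x) (s := squares)
  rw [Real.dist_eq, abs_sub_comm] at h₁
  rw [Real.dist_eq] at h₂
  rw [abs_of_nonneg (sub_nonneg.2 hxy)] at h₁ h₂
  unfold zigzag distSquares
  constructor <;> linarith

theorem breakpoint_spec (n : ℕ) :
    breakpoint n 0 = (n : ℝ) ^ 2 ∧ breakpoint n 0 < breakpoint n 1 ∧
      breakpoint n 1 < breakpoint n 2 ∧ breakpoint n 2 = ((n + 1 : ℕ) : ℝ) ^ 2 := by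
  have hn : (0 : ℝ) ≤ n := Nat.cast_nonneg n
  refine ⟨rfl, ?_, ?_, by push_cast; rfl⟩ <;> simp only [breakpoint] <;> nlinarith

theorem zigzag_affine (n : ℕ) : ∀ i < 2, ∀ t ∈ Icc (breakpoint n i) (breakpoint n (i + 1)),
    zigzag t = zigzag (breakpoint n i) + zigzagSlope i * (t - breakpoint n i) := by
  have hn : (0 : ℝ) ≤ n := Nat.cast_nonneg n
  have hmid : breakpoint n 1 ∈ Icc ((n : ℝ) ^ 2) (((n : ℝ) + 1) ^ 2) := by
    simp only [breakpoint, mem_Icc]; constructor <;> nlinarith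
  intro i hi t ht
  have ht' : t ∈ Icc ((n : ℝ) ^ 2) (((n : ℝ) + 1) ^ 2) := by
    interval_cases i <;> simp only [breakpoint, zero_add, mem_Icc] at ht ⊢ <;>
      constructor <;> nlinarith [ht.1, ht.2]
  interval_cases i
  · have hleft : t - (n : ℝ) ^ 2 ≤ ((n : ℝ) + 1) ^ 2 - t := by
      simp only [breakpoint, zero_add] at ht; linarith [ht.2]
    rw [zigzag, distSquares_eq ht', min_eq_left hleft]
    simp only [breakpoint, zigzagSlope, zigzag_sq]
    ring
  · have hright : ((n : ℝ) + 1) ^ 2 - t ≤ t - (n : ℝ) ^ 2 := by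
      simp only [breakpoint] at ht; linarith [ht.1]
    rw [zigzag, zigzag, distSquares_eq ht', min_eq_right hright, distSquares_eq hmid,
      min_eq_left (by simp only [breakpoint]; linarith)]
    simp only [breakpoint, zigzagSlope]
    ring

theorem tendsto_zigzag_sub_div : Tendsto (fun t => (zigzag t - t) / t) atTop (𝓝 0) := by
  have hlim : Tendsto (fun t => 3 / 2 * (√t)⁻¹) atTop (𝓝 0) := by
    simpa using (tendsto_inv_atTop_zero.comp Real.tendsto_sqrt_atTop).const_mul (3 / 2 : ℝ)
  refine tendsto_of_tendsto_of_tendsto_of_le_of_le' tendsto_const_nhds hlim ?_ ?_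
  · filter_upwards [eventually_gt_atTop 0] with t ht
    rw [zigzag, add_sub_cancel_left]
    exact div_nonneg (div_nonneg infDist_nonneg two_pos.le) ht.le
  · filter_upwards [eventually_ge_atTop 1] with t ht
    have hs : 1 ≤ √t := Real.one_le_sqrt.2 ht
    have hd := distSquares_le (zero_le_one.trans ht)
    calc (zigzag t - t) / t = distSquares t / 2 / t := by rw [zigzag, add_sub_cancel_left]
      _ ≤ 3 / 2 * √t / t := by gcongr; linarith
      _ = 3 / 2 * (√t)⁻¹ := by rw [mul_div_assoc, Real.sqrt_div_self]

theorem zigzag_sub_unbounded : ¬ ∃ C : ℝ, ∀ t : ℝ, 0 ≤ t → |zigzag t - t| ≤ C := by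
  rintro ⟨C, hC⟩
  obtain ⟨n, hn⟩ := exists_nat_gt (2 * C)
  have hn0 : (0 : ℝ) ≤ n := Nat.cast_nonneg n
  have hmid : breakpoint n 1 ∈ Icc ((n : ℝ) ^ 2) (((n : ℝ) + 1) ^ 2) := by
    simp only [breakpoint, mem_Icc]; constructor <;> nlinarith
  have hgap : zigzag (breakpoint n 1) - breakpoint n 1 = ((n : ℝ) + 1 / 2) / 2 := by
    rw [zigzag, add_sub_cancel_left, distSquares_eq hmid,
      min_eq_left (by simp only [breakpoint]; linarith)]
    simp only [breakpoint]
    ring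
  have := hC _ (le_trans (sq_nonneg _) hmid.1)
  rw [hgap, abs_of_nonneg (by positivity)] at this
  linarith

end SquaresZigzag

open SquaresZigzag in
/-- an example showing the geometric-spacing hypothesis in the converse
direction cannot be dropped: `f, g` continuous strictly increasing piecewise-linear
quasi-isometries with two-piece partitions of `[aₙ, aₙ₊₁]`, `(f x - g x)/x → 0`,
yet `maxᵢ |λₙᵢ - λ'ₙᵢ| ≥ 1/4` for all `n` and `sup |f - g| = ∞`. -/
theorem stmt6 : ∃ (f g : ℝ → ℝ) (a : ℕ → ℝ) (x : ℕ → ℕ → ℝ) (lam lam' : ℕ → ℕ → ℝ),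
    IsQI f ∧ IsQI g ∧
    ContinuousOn f (Set.Ici 0) ∧ ContinuousOn g (Set.Ici 0) ∧
    StrictMonoOn f (Set.Ici 0) ∧ StrictMonoOn g (Set.Ici 0) ∧
    IsPL f ∧ IsPL g ∧
    StrictMono a ∧ Tendsto a atTop atTop ∧
    Tendsto (fun n => f (a n) / a n) atTop (𝓝 1) ∧
    Tendsto (fun n => g (a n) / a n) atTop (𝓝 1) ∧
    (∀ n, x n 0 = a n ∧ x n 0 < x n 1 ∧ x n 1 < x n 2 ∧ x n 2 = a (n + 1)) ∧
    (∀ n, ∀ i < 2, ∀ t ∈ Set.Icc (x n i) (x n (i + 1)),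
      f t = f (x n i) + lam n i * (t - x n i)) ∧
    (∀ n, ∀ i < 2, ∀ t ∈ Set.Icc (x n i) (x n (i + 1)),
      g t = g (x n i) + lam' n i * (t - x n i)) ∧
    Tendsto (fun t => (f t - g t) / t) atTop (𝓝 0) ∧
    (∀ n, ∃ i < 2, (1 : ℝ) / 4 ≤ |lam n i - lam' n i|) ∧
    ¬ ∃ C : ℝ, ∀ t : ℝ, 0 ≤ t → |f t - g t| ≤ C := by
  have hid : ∀ x y : ℝ, 0 ≤ x → x ≤ y → 1 * (y - x) ≤ id y - id x ∧ id y - id x ≤ 1 * (y - x) :=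
    fun x y _ _ => by simp
  have hzig := fun x y (_ : (0 : ℝ) ≤ x) => zigzag_sub_bounds x y
  have hsq : Tendsto (fun n : ℕ => (n : ℝ) ^ 2) atTop atTop :=
    (tendsto_pow_atTop two_ne_zero).comp tendsto_natCast_atTop_atTop
  have hid_affine : ∀ n, ∀ i < 2, ∀ t ∈ Icc (breakpoint n i) (breakpoint n (i + 1)),
      id t = id (breakpoint n i) + 1 * (t - breakpoint n i) := fun _ _ _ _ _ => by simp
  refine ⟨zigzag, id, fun n => (n : ℝ) ^ 2, breakpoint, fun _ => zigzagSlope, fun _ _ => 1,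
    isQI_of_sub_bounds one_half_pos (by simpa using zigzag_sq 0)
      continuous_zigzag.continuousOn hzig,
    isQI_of_sub_bounds one_pos rfl continuousOn_id hid,
    continuous_zigzag.continuousOn, continuousOn_id,
    strictMonoOn_of_sub_lower_bound one_half_pos fun x y hx hxy => (hzig x y hx hxy).1,
    strictMonoOn_of_sub_lower_bound one_pos fun x y hx hxy => (hid x y hx hxy).1,
    isPL_of_twoPiece (by simp) hsq breakpoint_spec zigzag_affine,
    isPL_of_twoPiece (by simp) hsq breakpoint_spec hid_affine,
    fun m n hmn => by dsimp only; gcongr, hsq,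
    tendsto_comp_div_self_of_fixed hsq zigzag_sq, tendsto_comp_div_self_of_fixed hsq fun _ => rfl,
    breakpoint_spec, zigzag_affine, hid_affine, tendsto_zigzag_sub_div,
    fun _ => ⟨0, two_pos, by norm_num [zigzagSlope, abs_of_pos]⟩, zigzag_sub_unbounded⟩
end

section
/- Let f be a strictly increasing homeomorphism of [0,∞) that is a quasi-isometry, and suppose that for some integer n ≥ 1 the n-fold composition f^{∘n} satisfies f^{∘n}(x)/x → 1 as x → ∞. Then f(x)/x → 1 as x → ∞. (Equivalently, the quotient group QI(ℝ₊)/H is torsion-free.) -/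
open Filter Topology

/-!
The orbit of a point under a map that is monotone on an invariant set is monotone:
increasing if the first step goes up, decreasing if it goes down. Hence `f x` always lies
between `x` and `f^[n] x` for `n ≥ 1`, so `|f x / x - 1| ≤ |f^[n] x / x - 1|` for `x > 0`,
and the conclusion follows by squeezing.
-/

open Function Set

section Orbit

variable {α : Type*} [Preorder α] {f : α → α} {s : Set α} {x : α}

theorem MonotoneOn.monotone_iterate_of_le_map (hf : MonotoneOn f s) (hs : MapsTo f s s)
    (hx : x ∈ s) (hxf : x ≤ f x) : Monotone fun n => f^[n] x :=
  monotone_nat_of_le_succ fun n => by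
    induction n with
    | zero => simpa using hxf
    | succ n ih =>
      rw [iterate_succ_apply' f n, iterate_succ_apply' f (n + 1)]
      exact hf (hs.iterate n hx) (hs.iterate (n + 1) hx) ih

theorem MonotoneOn.antitone_iterate_of_map_le (hf : MonotoneOn f s) (hs : MapsTo f s s)
    (hx : x ∈ s) (hfx : f x ≤ x) : Antitone fun n => f^[n] x :=
  antitone_nat_of_succ_le fun n => by
    induction n with
    | zero => simpa using hfx
    | succ n ih =>
      rw [iterate_succ_apply' f n, iterate_succ_apply' f (n + 1)]
      exact hf (hs.iterate (n + 1) hx) (hs.iterate n hx) ih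

end Orbit

theorem MonotoneOn.abs_map_sub_le_abs_iterate_sub {α : Type*} [AddCommGroup α] [LinearOrder α]
    [IsOrderedAddMonoid α] {f : α → α} {s : Set α} {x : α} (hf : MonotoneOn f s)
    (hs : MapsTo f s s) (hx : x ∈ s) {n : ℕ} (hn : 1 ≤ n) :
    |f x - x| ≤ |f^[n] x - x| := by
  rcases le_total x (f x) with hxf | hfx
  · have hfn : f^[1] x ≤ f^[n] x := hf.monotone_iterate_of_le_map hs hx hxf hn
    exact abs_le_abs_of_nonneg (sub_nonneg.2 hxf) (sub_le_sub_right hfn x)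
  · have hfn : f^[n] x ≤ f^[1] x := hf.antitone_iterate_of_map_le hs hx hfx hn
    exact abs_le_abs_of_nonpos (sub_nonpos.2 hfx) (sub_le_sub_right hfn x)

theorem abs_div_sub_one_le_of_abs_sub_le {α : Type*} [Field α] [LinearOrder α]
    [IsStrictOrderedRing α] {a b x : α} (hx : 0 < x) (h : |a - x| ≤ |b - x|) :
    |a / x - 1| ≤ |b / x - 1| := by
  rw [div_sub_one hx.ne', div_sub_one hx.ne', abs_div, abs_div]
  exact div_le_div_of_nonneg_right h (abs_nonneg x)

theorem stmt9_general (f : ℝ → ℝ)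
    (hmono : StrictMonoOn f (Set.Ici 0)) (hbij : Set.BijOn f (Set.Ici 0) (Set.Ici 0))
    (n : ℕ) (hn : 1 ≤ n)
    (h : Tendsto (fun x => f^[n] x / x) atTop (𝓝 1)) :
    Tendsto (fun x => f x / x) atTop (𝓝 1) := by
  have hbound : ∀ᶠ x in atTop, ‖f x / x - 1‖ ≤ |f^[n] x / x - 1| := by
    filter_upwards [eventually_gt_atTop 0] with x hx
    exact abs_div_sub_one_le_of_abs_sub_le hx
      (hmono.monotoneOn.abs_map_sub_le_abs_iterate_sub hbij.mapsTo hx.le hn)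
  have hlim : Tendsto (fun x => |f^[n] x / x - 1|) atTop (𝓝 0) := by
    simpa using (h.sub_const 1).abs
  exact tendsto_sub_nhds_zero_iff.1 (squeeze_zero_norm' hbound hlim)

/-- if a strictly increasing quasi-isometric homeomorphism `f` of `[0,∞)`
has `f^[n](x)/x → 1` for some `n ≥ 1`, then already `f(x)/x → 1`.
(`QI(ℝ₊)/H` is torsion-free.) -/
theorem stmt9 (f : ℝ → ℝ) (hqi : IsQI f) (hcont : ContinuousOn f (Set.Ici 0))
    (hmono : StrictMonoOn f (Set.Ici 0)) (hbij : Set.BijOn f (Set.Ici 0) (Set.Ici 0))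
    (n : ℕ) (hn : 1 ≤ n)
    (h : Tendsto (fun x => f^[n] x / x) atTop (𝓝 1)) :
    Tendsto (fun x => f x / x) atTop (𝓝 1) :=
  stmt9_general f hmono hbij n hn h
end

section
/- There exist strictly increasing homeomorphisms X, Y, Z : ℝ → ℝ, each commuting with the unit translation (that is, F(t + 1) = F(t) + 1 for F ∈ {X, Y, Z}), such that X∘X = Y∘Y∘Y = Z^{∘7} = X∘Y∘Z, and this common composition is the translation t ↦ t + 1. In particular the group of lifts of orientation-preserving circle homeomorphisms contains a subgroup generated by x, y, z satisfying the relations x² = y³ = z⁷ = xyz of the central extension of the (2,3,7) triangle group. -/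
/-!
The universal cover of `PSL₂(ℝ)` acts on `ℝ` by lifting the projective action on
`ℝP¹ ≅ ℝ/ℤ`; rotation by `πa` lifts to `t ↦ t + a`. Take `X` = translation by `1/2`, `Z` the
conjugate of translation by `1/7` by the lift of `diag(m, 1)`, and `Y = X⁻¹ ∘ (· + 1) ∘ Z⁻¹`, so
that `X² = Z⁷ = XYZ = (· + 1)` hold by construction. For the right `m` the matrix of `Y` has
trace `1`, hence is conjugate to rotation by `π/3`, explicitly by rotation by `-π/4` times
`diag(n, 1)`. So `Y` agrees with the corresponding conjugate `W` of translation by `1/3` up to a deck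
translation `t ↦ t + j`. As `W³ = (· + 1)` while `Y` moves every point by less than `1/2`,
`Y³ 0 = 1 + 3j` forces `j = 0`.
-/

open Filter Topology

open Real Set Function
open scoped Matrix

structure IsLiftHomeo (F : ℝ → ℝ) : Prop where
  strictMono : StrictMono F
  surjective : Surjective F
  map_add_one : ∀ t, F (t + 1) = F t + 1

namespace IsLiftHomeo

variable {F G : ℝ → ℝ}

theorem continuous (hF : IsLiftHomeo F) : Continuous F :=
  hF.strictMono.monotone.continuous_of_surjective hF.surjective

theorem comp (hF : IsLiftHomeo F) (hG : IsLiftHomeo G) : IsLiftHomeo (F ∘ G) where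
  strictMono := hF.strictMono.comp hG.strictMono
  surjective := hF.surjective.comp hG.surjective
  map_add_one t := by simp only [comp_apply, hG.map_add_one, hF.map_add_one]

theorem map_add_int (hF : IsLiftHomeo F) (t : ℝ) (j : ℤ) : F (t + j) = F t + j :=
  CircleDeg1Lift.map_add_int ⟨⟨F, hF.strictMono.monotone⟩, hF.map_add_one⟩ t j

theorem of_continuous (hc : Continuous F) (hinj : Injective F) (hsurj : Surjective F)
    (h1 : ∀ t, F (t + 1) = F t + 1) : IsLiftHomeo F where
  strictMono := (hc.strictMono_of_inj hinj).resolve_right fun hanti =>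
    (hanti (lt_add_one (0 : ℝ))).not_ge (by rw [h1]; linarith)
  surjective := hsurj
  map_add_one := h1

end IsLiftHomeo

theorem isLiftHomeo_add_const (a : ℝ) : IsLiftHomeo (· + a) where
  strictMono := strictMono_id.add_const a
  surjective t := ⟨t - a, sub_add_cancel t a⟩
  map_add_one t := add_right_comm t 1 a

theorem iterate_eq_add_one_of_semiconj {H F : ℝ → ℝ} (hsurj : Surjective H)
    (h1 : ∀ t, H (t + 1) = H t + 1) {a : ℝ} {n : ℕ} (hconj : Semiconj H (· + a) F)
    (hn : n * a = 1) (t : ℝ) : F^[n] t = t + 1 := by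
  obtain ⟨u, rfl⟩ := hsurj t
  rw [← (hconj.iterate_right n).eq u, add_right_iterate_apply, nsmul_eq_mul, hn, h1]

/-- `ℝ` covers `ℝP¹ ≅ ℝ/ℤ` via `t ↦ [cos πt : sin πt]`; this is the representing unit vector. -/
noncomputable def projDir (t : ℝ) : Fin 2 → ℝ := ![cos (π * t), sin (π * t)]

def IsProjLift (F : ℝ → ℝ) (M : Matrix (Fin 2) (Fin 2) ℝ) : Prop :=
  ∀ t, ∃ ρ : ℝ, ρ ≠ 0 ∧ projDir (F t) = ρ • M *ᵥ projDir t

noncomputable def rot (a : ℝ) : Matrix (Fin 2) (Fin 2) ℝ :=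
  !![cos (π * a), -sin (π * a); sin (π * a), cos (π * a)]

theorem isProjLift_id : IsProjLift id 1 :=
  fun t => ⟨1, one_ne_zero, by simp⟩

theorem isProjLift_add_const (a : ℝ) : IsProjLift (· + a) (rot a) := by
  intro t
  refine ⟨1, one_ne_zero, ?_⟩
  ext i
  fin_cases i <;> simp [projDir, rot, mul_add, cos_add, sin_add] <;> ring

namespace IsProjLift

variable {F G : ℝ → ℝ} {M N : Matrix (Fin 2) (Fin 2) ℝ}

theorem comp (hF : IsProjLift F M) (hG : IsProjLift G N) : IsProjLift (F ∘ G) (M * N) := by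
  intro t
  obtain ⟨σ, hσ, hGt⟩ := hG t
  obtain ⟨ρ, hρ, hFt⟩ := hF (G t)
  refine ⟨ρ * σ, mul_ne_zero hρ hσ, ?_⟩
  rw [comp_apply, hFt, hGt, Matrix.mulVec_smul, Matrix.mulVec_mulVec, smul_smul]

theorem sub_mem_range_intCast (hF : IsProjLift F M) (hG : IsProjLift G M) (t : ℝ) :
    F t - G t ∈ range ((↑) : ℤ → ℝ) := by
  obtain ⟨ρ, -, hFt⟩ := hF t
  obtain ⟨σ, -, hGt⟩ := hG t
  have hsin : sin (π * (F t - G t)) = 0 := by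
    have h0 := congrFun hFt 0
    have h1 := congrFun hFt 1
    have h0' := congrFun hGt 0
    have h1' := congrFun hGt 1
    simp only [projDir, Matrix.cons_val_zero, Matrix.cons_val_one, Pi.smul_apply,
      smul_eq_mul] at h0 h1 h0' h1'
    rw [mul_sub, sin_sub, h0, h1, h0', h1']
    ring
  obtain ⟨j, hj⟩ := sin_eq_zero_iff.mp hsin
  exact ⟨j, mul_left_cancel₀ pi_ne_zero (by linarith)⟩

theorem exists_int_eq_add (hF : IsProjLift F M) (hG : IsProjLift G M) (hFc : Continuous F)
    (hGc : Continuous G) : ∃ j : ℤ, ∀ t, F t = G t + j := by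
  obtain ⟨j, hj⟩ := hF.sub_mem_range_intCast hG 0
  refine ⟨j, fun t => ?_⟩
  have := isPreconnected_univ.constant_of_mapsTo
    Int.isClosedEmbedding_coe_real.isInducing.isDiscrete_range (hFc.sub hGc).continuousOn
    (fun s _ => hF.sub_mem_range_intCast hG s) (mem_univ t) (mem_univ 0)
  simp only [Pi.sub_apply] at this
  linarith

end IsProjLift

/-- The lift of `diag(k, 1)` fixing `0`. For `k > 0` the form `k x² + y²` is positive definite, so
`diag(k, 1)` turns every line by an angle in `(-π/2, π/2)`, namely the `arctan` of
(cross product / inner product) of a unit vector `v` with `diag(k, 1) v`. -/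
noncomputable def diagLift (k t : ℝ) : ℝ :=
  t + arctan ((1 - k) * sin (π * t) * cos (π * t) / (k * cos (π * t) ^ 2 + sin (π * t) ^ 2)) / π

section diagLift

variable {k : ℝ}

theorem mul_cos_sq_add_sin_sq_pos (hk : 0 < k) (x : ℝ) : 0 < k * cos x ^ 2 + sin x ^ 2 := by
  nlinarith [sin_sq_add_cos_sq x, mul_pos hk hk]

theorem isProjLift_diagLift (hk : 0 < k) : IsProjLift (diagLift k) !![k, 0; 0, 1] := by
  intro t
  have hD : 0 < k * cos (π * t) ^ 2 + sin (π * t) ^ 2 := mul_cos_sq_add_sin_sq_pos hk _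
  set x := (1 - k) * sin (π * t) * cos (π * t) / (k * cos (π * t) ^ 2 + sin (π * t) ^ 2) with hx
  have hcs : sin (π * t) ^ 2 + cos (π * t) ^ 2 = 1 := sin_sq_add_cos_sq _
  have harg : π * diagLift k t = π * t + arctan x := by
    rw [diagLift, mul_add, mul_div_cancel₀ _ pi_ne_zero]
  have hM : !![k, 0; 0, 1] *ᵥ projDir t = ![k * cos (π * t), sin (π * t)] := by
    ext i
    fin_cases i <;> simp [projDir, mul_comm]
  refine ⟨((k * cos (π * t) ^ 2 + sin (π * t) ^ 2) * √(1 + x ^ 2))⁻¹, by positivity, ?_⟩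
  rw [hM]
  simp only [projDir, harg, cos_add, sin_add, cos_arctan, sin_arctan, Matrix.smul_cons,
    smul_eq_mul, Matrix.smul_empty, Matrix.vecCons_inj, and_true]
  have hD' : cos (π * t) ^ 2 * k + sin (π * t) ^ 2 ≠ 0 := by linarith
  constructor <;> field_simp <;> rw [hx] <;> field_simp
  · linear_combination (k * cos (π * t)) * hcs
  · linear_combination sin (π * t) * hcs

theorem continuous_diagLift (hk : 0 < k) : Continuous (diagLift k) := by
  have := mul_cos_sq_add_sin_sq_pos hk
  unfold diagLift
  fun_prop (disch := exact fun x => (this _).ne')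

theorem diagLift_zero (k : ℝ) : diagLift k 0 = 0 := by simp [diagLift]

theorem diagLift_add_one (k t : ℝ) : diagLift k (t + 1) = diagLift k t + 1 := by
  simp only [diagLift, mul_add, mul_one, sin_add_pi, cos_add_pi, neg_sq, mul_neg, neg_mul, neg_neg]
  ring

theorem diagLift_diagLift_inv (hk : 0 < k) (t : ℝ) : diagLift k (diagLift k⁻¹ t) = t := by
  have hlift : IsProjLift (diagLift k ∘ diagLift k⁻¹) 1 := by
    simpa [Matrix.mul_fin_two, hk.ne', Matrix.one_fin_two] using
      (isProjLift_diagLift hk).comp (isProjLift_diagLift (inv_pos.mpr hk))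
  obtain ⟨j, hj⟩ := hlift.exists_int_eq_add isProjLift_id
    ((continuous_diagLift hk).comp (continuous_diagLift (inv_pos.mpr hk))) continuous_id
  have hj0 : (j : ℝ) = 0 := by simpa [diagLift_zero] using (hj 0).symm
  simpa [hj0] using hj t

theorem diagLift_inv_diagLift (hk : 0 < k) (t : ℝ) : diagLift k⁻¹ (diagLift k t) = t := by
  simpa using diagLift_diagLift_inv (inv_pos.mpr hk) t

theorem isLiftHomeo_diagLift (hk : 0 < k) : IsLiftHomeo (diagLift k) :=
  .of_continuous (continuous_diagLift hk) (LeftInverse.injective (diagLift_inv_diagLift hk))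
    (RightInverse.surjective (diagLift_diagLift_inv hk)) (diagLift_add_one k)

end diagLift

namespace Triangle237

noncomputable def q : ℝ := √(1 - 4 * sin (π / 7) ^ 2)

/-- A root of `m sin (π/7) + sin (π/7) / m = 1`: the matrix of `Y` is
`!![sin (π/7) / m, -cos (π/7); cos (π/7), m sin (π/7)]`, whose trace must be `2 cos (π/3) = 1`. -/
noncomputable def m : ℝ := (1 + q) / (2 * sin (π / 7))

/-- Chosen so that `√3 (n + n⁻¹) = 4 cos (π/7)` and `√3 (n - n⁻¹) = 2 q`: then conjugating
rotation by `π/3` with `rot (-1/4) * diag(n, 1)` gives `matY`. -/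
noncomputable def n : ℝ := (2 * cos (π / 7) + q) / √3

theorem sin_pi_div_seven_pos : 0 < sin (π / 7) :=
  sin_pos_of_pos_of_lt_pi (by positivity) (by linarith [pi_pos])

theorem cos_pi_div_seven_pos : 0 < cos (π / 7) :=
  cos_pos_of_mem_Ioo ⟨by linarith [pi_pos], by linarith [pi_pos]⟩

theorem q_sq : q ^ 2 = 1 - 4 * sin (π / 7) ^ 2 := by
  have hlt : sin (π / 7) < 1 / 2 := by
    rw [← sin_pi_div_six]
    exact sin_lt_sin_of_lt_of_le_pi_div_two (by linarith [pi_pos]) (by linarith [pi_pos])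
      (by linarith [pi_pos])
  exact sq_sqrt (by nlinarith [sin_pi_div_seven_pos])

theorem m_pos : 0 < m := by
  have := sin_pi_div_seven_pos
  unfold m q
  positivity

theorem n_pos : 0 < n := by
  have := cos_pi_div_seven_pos
  unfold n q
  positivity

theorem m_mul_sin : m * sin (π / 7) = (1 + q) / 2 := by
  have := sin_pi_div_seven_pos
  unfold m
  field_simp

theorem m_inv_mul_sin : m⁻¹ * sin (π / 7) = (1 - q) / 2 := by
  have hs := sin_pi_div_seven_pos
  have hq : 0 ≤ q := sqrt_nonneg _
  unfold m
  rw [inv_div, div_mul_eq_mul_div, div_eq_iff (by positivity)]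
  linear_combination q_sq / 2

theorem sqrt_three_mul_n : √3 * n = 2 * cos (π / 7) + q := by
  unfold n
  field_simp

theorem sqrt_three_mul_n_inv : √3 * n⁻¹ = 2 * cos (π / 7) - q := by
  have hpos : 0 < 2 * cos (π / 7) + q := by
    have := cos_pi_div_seven_pos
    unfold q
    positivity
  have h3 : √3 ^ 2 = 3 := sq_sqrt (by norm_num)
  rw [n, inv_div, ← mul_div_assoc, div_eq_iff hpos.ne']
  linear_combination h3 + q_sq - 4 * sin_sq_add_cos_sq (π / 7)

noncomputable def X : ℝ → ℝ := (· + 1 / 2)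

noncomputable def Z : ℝ → ℝ := diagLift m ∘ (· + 1 / 7) ∘ diagLift m⁻¹

noncomputable def Y : ℝ → ℝ := (· + 1 / 2) ∘ diagLift m ∘ (· + -1 / 7) ∘ diagLift m⁻¹

noncomputable def W : ℝ → ℝ := (· + -1 / 4) ∘ diagLift n ∘ (· + 1 / 3) ∘ diagLift n⁻¹ ∘ (· + 1 / 4)

noncomputable def matY : Matrix (Fin 2) (Fin 2) ℝ :=
  !![(1 - q) / 2, -cos (π / 7); cos (π / 7), (1 + q) / 2]

theorem isProjLift_Y : IsProjLift Y matY := by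
  unfold Y
  convert (isProjLift_add_const (1 / 2)).comp ((isProjLift_diagLift m_pos).comp
    ((isProjLift_add_const (-1 / 7)).comp (isProjLift_diagLift (inv_pos.mpr m_pos)))) using 1
  have hm : m * m⁻¹ = 1 := mul_inv_cancel₀ m_pos.ne'
  simp only [matY, rot, Matrix.mul_fin_two, EmbeddingLike.apply_eq_iff_eq, Matrix.vecCons_inj,
    and_true, show π * (1 / 2) = π / 2 by ring, show π * (-1 / 7) = -(π / 7) by ring,
    cos_pi_div_two, sin_pi_div_two, cos_neg, sin_neg]
  refine ⟨⟨?_, ?_⟩, ?_, ?_⟩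
  · linear_combination -m_inv_mul_sin
  · ring
  · linear_combination -cos (π / 7) * hm
  · linear_combination -m_mul_sin

theorem isProjLift_W : IsProjLift W matY := by
  unfold W
  convert (isProjLift_add_const (-1 / 4)).comp ((isProjLift_diagLift n_pos).comp
    ((isProjLift_add_const (1 / 3)).comp ((isProjLift_diagLift (inv_pos.mpr n_pos)).comp
    (isProjLift_add_const (1 / 4))))) using 1
  have h2 : √2 * √2 = 2 := mul_self_sqrt zero_le_two
  have hn : n * n⁻¹ = 1 := mul_inv_cancel₀ n_pos.ne'
  have h3 := sqrt_three_mul_n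
  have h3' := sqrt_three_mul_n_inv
  simp only [matY, rot, Matrix.mul_fin_two, EmbeddingLike.apply_eq_iff_eq, Matrix.vecCons_inj,
    and_true, show π * (-1 / 4) = -(π / 4) by ring, show π * (1 / 4) = π / 4 by ring,
    show π * (1 / 3) = π / 3 by ring, cos_neg, sin_neg, cos_pi_div_four, sin_pi_div_four,
    cos_pi_div_three, sin_pi_div_three]
  refine ⟨⟨?_, ?_⟩, ?_, ?_⟩
  · linear_combination -(n * n⁻¹ - √3 * n + √3 * n⁻¹ + 1) / 8 * h2 - hn / 4 + h3 / 4 - h3' / 4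
  · linear_combination -(-n * n⁻¹ - √3 * n - √3 * n⁻¹ + 1) / 8 * h2 + hn / 4 + h3 / 4 + h3' / 4
  · linear_combination -(-n * n⁻¹ + √3 * n + √3 * n⁻¹ + 1) / 8 * h2 + hn / 4 - h3 / 4 - h3' / 4
  · linear_combination -(n * n⁻¹ + √3 * n - √3 * n⁻¹ + 1) / 8 * h2 - hn / 4 - h3 / 4 + h3' / 4

theorem isLiftHomeo_X : IsLiftHomeo X := isLiftHomeo_add_const _

theorem isLiftHomeo_Y : IsLiftHomeo Y :=
  (isLiftHomeo_add_const _).comp <| (isLiftHomeo_diagLift m_pos).comp <|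
    (isLiftHomeo_add_const _).comp (isLiftHomeo_diagLift (inv_pos.mpr m_pos))

theorem isLiftHomeo_Z : IsLiftHomeo Z :=
  (isLiftHomeo_diagLift m_pos).comp <|
    (isLiftHomeo_add_const _).comp (isLiftHomeo_diagLift (inv_pos.mpr m_pos))

theorem isLiftHomeo_W : IsLiftHomeo W :=
  (isLiftHomeo_add_const _).comp <| (isLiftHomeo_diagLift n_pos).comp <|
    (isLiftHomeo_add_const _).comp <| (isLiftHomeo_diagLift (inv_pos.mpr n_pos)).comp
    (isLiftHomeo_add_const _)

theorem Z_iterate_seven (t : ℝ) : Z^[7] t = t + 1 :=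
  iterate_eq_add_one_of_semiconj (isLiftHomeo_diagLift m_pos).surjective (diagLift_add_one m)
    (a := 1 / 7) (fun u => by simp [Z, diagLift_inv_diagLift m_pos]) (by norm_num) t

theorem W_iterate_three (t : ℝ) : W^[3] t = t + 1 := by
  have hH := (isLiftHomeo_add_const (-1 / 4)).comp (isLiftHomeo_diagLift n_pos)
  refine iterate_eq_add_one_of_semiconj hH.surjective hH.map_add_one (a := 1 / 3)
    (fun u => ?_) (by norm_num) t
  simp [W, diagLift_inv_diagLift n_pos, neg_div]

theorem Y_apply_Z (t : ℝ) : Y (Z t) = t + 1 / 2 := by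
  simp [Y, Z, diagLift_inv_diagLift m_pos, diagLift_diagLift_inv m_pos, neg_div]

theorem abs_Y_sub_lt (t : ℝ) : |Y t - t| < 1 / 2 := by
  obtain ⟨u, rfl⟩ := (isLiftHomeo_diagLift m_pos).surjective t
  have hmono := (isLiftHomeo_diagLift m_pos).strictMono
  have h1 : diagLift m (u - 1) < diagLift m (u + -1 / 7) := hmono (by linarith)
  have h2 : diagLift m (u + -1 / 7) < diagLift m u := hmono (by linarith)
  have h3 := diagLift_add_one m (u - 1)
  simp only [sub_add_cancel] at h3
  simp only [Y, comp_apply, diagLift_inv_diagLift m_pos]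
  rw [abs_lt]
  constructor <;> linarith

theorem Y_eq_W : Y = W := by
  obtain ⟨j, hj⟩ := isProjLift_Y.exists_int_eq_add isProjLift_W isLiftHomeo_Y.continuous
    isLiftHomeo_W.continuous
  have hYW : ∀ k : ℕ, Y^[k] 0 = W^[k] 0 + k * j := by
    intro k
    induction k with
    | zero => simp
    | succ k ih =>
      rw [iterate_succ_apply', ih, hj, iterate_succ_apply', ← Int.cast_natCast,
        ← Int.cast_mul, isLiftHomeo_W.map_add_int]
      push_cast
      ring
  have hY3 : Y (Y (Y 0)) = 1 + 3 * j := by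
    change Y^[3] 0 = _
    rw [hYW, W_iterate_three]
    push_cast
    ring
  have h0 := abs_lt.mp (abs_Y_sub_lt 0)
  have h1 := abs_lt.mp (abs_Y_sub_lt (Y 0))
  have h2 := abs_lt.mp (abs_Y_sub_lt (Y (Y 0)))
  have hj0 : j = 0 := by
    have hlt : j < 1 := by exact_mod_cast (by linarith : (j : ℝ) < 1)
    have hgt : -1 < j := by exact_mod_cast (by linarith : (-1 : ℝ) < j)
    omega
  funext t
  simp [hj, hj0]

end Triangle237

open Triangle237

/-- there are strictly increasing self-homeomorphisms `X, Y, Z` of `ℝ`,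
each commuting with the unit translation, with
`X² = Y³ = Z⁷ = X∘Y∘Z = (t ↦ t + 1)` — lifts realizing the relations
`x² = y³ = z⁷ = xyz` of the (2,3,7) triangle group extension. -/
theorem stmt11 : ∃ X Y Z : ℝ → ℝ,
    (StrictMono X ∧ Continuous X ∧ Function.Surjective X) ∧
    (StrictMono Y ∧ Continuous Y ∧ Function.Surjective Y) ∧
    (StrictMono Z ∧ Continuous Z ∧ Function.Surjective Z) ∧
    (∀ t, X (t + 1) = X t + 1) ∧ (∀ t, Y (t + 1) = Y t + 1) ∧
    (∀ t, Z (t + 1) = Z t + 1) ∧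
    (∀ t, X (X t) = t + 1) ∧ (∀ t, Y (Y (Y t)) = t + 1) ∧
    (∀ t, Z^[7] t = t + 1) ∧ (∀ t, X (Y (Z t)) = t + 1) := by
  refine ⟨X, Y, Z, ⟨isLiftHomeo_X.strictMono, isLiftHomeo_X.continuous, isLiftHomeo_X.surjective⟩,
    ⟨isLiftHomeo_Y.strictMono, isLiftHomeo_Y.continuous, isLiftHomeo_Y.surjective⟩,
    ⟨isLiftHomeo_Z.strictMono, isLiftHomeo_Z.continuous, isLiftHomeo_Z.surjective⟩,
    isLiftHomeo_X.map_add_one, isLiftHomeo_Y.map_add_one, isLiftHomeo_Z.map_add_one,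
    fun t => ?_, fun t => ?_, Z_iterate_seven, fun t => ?_⟩
  · simp only [X]
    ring
  · rw [Y_eq_W]
    exact W_iterate_three t
  · rw [Y_apply_Z, X]
    ring
end

section
/- Let f : [0,∞) → [0,∞) be a quasi-isometry. Suppose there exist real numbers λ > δ > 0, a subset D that is dense in the interval (λ − δ, λ + δ), and a constant M > 0 such that |s·f(x) − f(s·x)| < M for all s ∈ D and all x ≥ 0. Then there exists c > 0 such that f(x)/x → c as x → ∞ (that is, [f] lies in ∪_{c>0} H_c). -/
open Filter Topology

/-! Write `r x = f x / x`. The commutation bound says `|r (s x) - r x| ≤ M / (s x)` for `s ∈ D`;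
since `f` is coarsely Lipschitz, the same holds with `M + K` in place of `M` for every `s` in the
closure of `D`, in particular on the whole interval `[λ - δ, λ + δ]`. Some `e > 1` is such a
multiplier or the inverse of one; the errors along `x, e x, e² x, …` then form a geometric series,
so `r (eᵏ x)` converges to some `L x` with `|r x - L x| = O(1/x)`. Each multiplier of the interval
leaves `L` invariant, and the multiplicative group generated by a nondegenerate interval is all
of `(0, ∞)`, so `L` is a constant `c`. Hence `r → c`, and `c ≥ 1 / K` by the lower
quasi-isometry bound. -/

open Set

def IsCoarsePeriod (r : ℝ → ℝ) (s C : ℝ) : Prop :=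
  ∀ x, 0 < x → |r (s * x) - r x| ≤ C / x

lemma abs_mul_sub_le_of_mem_closure {g : ℝ → ℝ} {K M : ℝ} {D : Set ℝ}
    (hg : ∀ x y, 0 ≤ x → 0 ≤ y → |g x - g y| ≤ K * |x - y| + K) (hD : D ⊆ Ici 0)
    (hcomm : ∀ t ∈ D, ∀ x, 0 ≤ x → |t * g x - g (t * x)| ≤ M)
    {s : ℝ} (hs : s ∈ closure D) {x : ℝ} (hx : 0 ≤ x) :
    |s * g x - g (s * x)| ≤ M + K := by
  have hs0 : 0 ≤ s := closure_minimal hD isClosed_Ici hs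
  let T := {t : ℝ | |s * g x - g (s * x)| ≤ |t - s| * (|g x| + K * x) + (M + K)}
  have hDT : D ⊆ T := fun t ht => by
    have ht0 : 0 ≤ t := hD ht
    have hlip := hg (t * x) (s * x) (by positivity) (by positivity)
    rw [← sub_mul, abs_mul, abs_of_nonneg hx] at hlip
    have hcoef : |s * g x - t * g x| = |t - s| * |g x| := by
      rw [← sub_mul, abs_mul, abs_sub_comm]
    calc |s * g x - g (s * x)|
        ≤ |s * g x - t * g x| + |t * g x - g (t * x)| + |g (t * x) - g (s * x)| :=
          by linarith [abs_sub_le (s * g x) (t * g x) (g (s * x)),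
            abs_sub_le (t * g x) (g (t * x)) (g (s * x))]
      _ ≤ |t - s| * |g x| + M + (K * (|t - s| * x) + K) := by
          gcongr
          · exact hcoef.le
          · exact hcomm t ht x hx
      _ = |t - s| * (|g x| + K * x) + (M + K) := by ring
  -- the slack `|t - s| * _` makes the set closed in `t`, and it vanishes at `t = s`
  have hT : IsClosed T := isClosed_le continuous_const (by fun_prop)
  simpa [T] using closure_minimal hDT hT hs

lemma isCoarsePeriod_div_self {g : ℝ → ℝ} {s M : ℝ} (hs : 0 < s)
    (h : ∀ x, 0 ≤ x → |s * g x - g (s * x)| ≤ M) :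
    IsCoarsePeriod (fun x => g x / x) s (M / s) := fun x hx => by
  have hsx : 0 < s * x := mul_pos hs hx
  have hid : g (s * x) / (s * x) - g x / x = -(s * g x - g (s * x)) / (s * x) := by
    field_simp
    ring
  rw [hid, abs_div, abs_neg, abs_of_pos hsx, div_div]
  exact div_le_div_of_nonneg_right (h x hx.le) hsx.le

namespace IsCoarsePeriod

variable {r : ℝ → ℝ} {s C : ℝ}

lemma inv (h : IsCoarsePeriod r s C) (hs : 0 < s) : IsCoarsePeriod r s⁻¹ (C * s) := fun x hx => by
  have := h (s⁻¹ * x) (by positivity)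
  rw [mul_inv_cancel_left₀ hs.ne', abs_sub_comm] at this
  convert this using 1
  field_simp

lemma exists_tendsto_pow_mul (h : IsCoarsePeriod r s C) (hs : 1 < s) {x : ℝ} (hx : 0 < x) :
    ∃ l, Tendsto (fun k : ℕ => r (s ^ k * x)) atTop (𝓝 l) ∧ |r x - l| ≤ C / (1 - s⁻¹) / x := by
  have hstep : ∀ k : ℕ, dist (r (s ^ k * x)) (r (s ^ (k + 1) * x)) ≤ C / x * s⁻¹ ^ k := by
    intro k
    have := h (s ^ k * x) (by positivity)
    rw [dist_comm, Real.dist_eq, pow_succ', mul_assoc]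
    convert this using 1
    rw [inv_pow]
    field_simp
  have hr : s⁻¹ < 1 := inv_lt_one_of_one_lt₀ hs
  obtain ⟨l, hl⟩ := cauchySeq_tendsto_of_complete (cauchySeq_of_le_geometric _ _ hr hstep)
  refine ⟨l, hl, ?_⟩
  have := dist_le_of_le_geometric_of_tendsto₀ _ _ hr hstep hl
  rw [Real.dist_eq, pow_zero, one_mul] at this
  convert this using 1
  ring

lemma eq_of_tendsto_pow_mul (h : IsCoarsePeriod r s C) {e : ℝ} (he : 1 < e) {x l₁ l₂ : ℝ}
    (hx : 0 < x)
    (hl₁ : Tendsto (fun k : ℕ => r (e ^ k * (s * x))) atTop (𝓝 l₁))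
    (hl₂ : Tendsto (fun k : ℕ => r (e ^ k * x)) atTop (𝓝 l₂)) : l₁ = l₂ := by
  have hbound : Tendsto (fun k : ℕ => C / x * e⁻¹ ^ k) atTop (𝓝 0) := by
    simpa using (tendsto_pow_atTop_nhds_zero_of_lt_one (by positivity)
      (inv_lt_one_of_one_lt₀ he)).const_mul (C / x)
  have hdiff : Tendsto (fun k : ℕ => r (e ^ k * (s * x)) - r (e ^ k * x)) atTop (𝓝 0) := by
    refine squeeze_zero_norm (fun k => ?_) hbound
    rw [Real.norm_eq_abs, mul_left_comm]
    convert h (e ^ k * x) (by positivity) using 1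
    rw [inv_pow]
    field_simp
  exact sub_eq_zero.mp (tendsto_nhds_unique (hl₁.sub hl₂) hdiff)

end IsCoarsePeriod

lemma AddSubgroup.eq_top_of_Icc_subset {G : AddSubgroup ℝ} {a b : ℝ} (hab : a < b)
    (h : Icc a b ⊆ G) : G = ⊤ := by
  have ha : a ∈ G := h ⟨le_rfl, hab.le⟩
  have hsymm : Icc (a - b) (b - a) ⊆ G := fun w hw => by
    rcases le_total 0 w with hw0 | hw0
    · simpa using G.sub_mem (h ⟨by linarith, by linarith [hw.2]⟩ : a + w ∈ G) ha
    · simpa using G.sub_mem ha (h ⟨by linarith, by linarith [hw.1]⟩ : a - w ∈ G)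
  have hopen : IsOpen (G : Set ℝ) :=
    G.isOpen_of_mem_nhds (g := 0)
      (mem_of_superset (Icc_mem_nhds (by linarith) (by linarith)) hsymm)
  exact AddSubgroup.coe_eq_univ.1
    (IsClopen.eq_univ ⟨G.isClosed_of_isOpen hopen, hopen⟩ ⟨0, G.zero_mem⟩)

lemma eq_of_forall_mul_mem_Icc {L : ℝ → ℝ} {p q : ℝ} (hp : 0 < p) (hpq : p < q)
    (h : ∀ s ∈ Icc p q, ∀ x, 0 < x → L (s * x) = L x) {x y : ℝ} (hx : 0 < x) (hy : 0 < y) :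
    L y = L x := by
  let G : AddSubgroup ℝ :=
    { carrier := {u | ∀ x, 0 < x → L (Real.exp u * x) = L x}
      add_mem' := fun {u v} hu hv x hx => by
        rw [Real.exp_add, mul_assoc, hu _ (by positivity), hv x hx]
      zero_mem' := fun x _ => by rw [Real.exp_zero, one_mul]
      neg_mem' := fun {u} hu x hx => by
        rw [← hu _ (by positivity), ← mul_assoc, ← Real.exp_add, add_neg_cancel, Real.exp_zero,
          one_mul] }
  have hG : G = ⊤ := AddSubgroup.eq_top_of_Icc_subset (Real.log_lt_log hp hpq) fun u hu =>
    h _ ⟨(Real.log_le_iff_le_exp hp).1 hu.1, (Real.le_log_iff_exp_le (hp.trans hpq)).1 hu.2⟩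
  have hmem : Real.log (y / x) ∈ G := hG ▸ AddSubgroup.mem_top _
  simpa [Real.exp_log (div_pos hy hx), div_mul_cancel₀ _ hx.ne'] using hmem x hx

lemma tendsto_of_abs_sub_le_div {r : ℝ → ℝ} {c B : ℝ} (h : ∀ x, 0 < x → |r x - c| ≤ B / x) :
    Tendsto r atTop (𝓝 c) := by
  rw [tendsto_iff_norm_sub_tendsto_zero]
  refine squeeze_zero' (Eventually.of_forall fun _ => norm_nonneg _) ?_
    (tendsto_const_nhds (x := B) |>.div_atTop tendsto_id)
  filter_upwards [eventually_gt_atTop 0] with x hx using h x hx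

lemma one_div_le_of_tendsto_div_self {f : ℝ → ℝ} {K c : ℝ} (hf0 : ∀ x, 0 ≤ x → 0 ≤ f x)
    (hlow : ∀ x y, 0 ≤ x → 0 ≤ y → 1 / K * |x - y| - K ≤ |f x - f y|)
    (hc : Tendsto (fun x => f x / x) atTop (𝓝 c)) : 1 / K ≤ c := by
  have hbound : ∀ x, 0 < x → 1 / K - (K + f 0) / x ≤ f x / x := fun x hx => by
    have hdist := hlow x 0 hx.le le_rfl
    rw [sub_zero, abs_of_pos hx] at hdist
    have htri : |f x - f 0| ≤ f x + f 0 := by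
      rw [abs_le]; constructor <;> linarith [hf0 x hx.le, hf0 0 le_rfl]
    rw [sub_div' hx.ne', div_le_div_iff_of_pos_right hx]
    linarith [show 1 / K * x = x / K by ring]
  have hlim : Tendsto (fun x => 1 / K - (K + f 0) / x) atTop (𝓝 (1 / K)) := by
    simpa using
      tendsto_const_nhds.sub (tendsto_const_nhds (x := K + f 0) |>.div_atTop tendsto_id)
  exact le_of_tendsto_of_tendsto hlim hc ((eventually_gt_atTop 0).mono hbound)

theorem stmt13_general (f : ℝ → ℝ) (hf : IsQI f) (lam del : ℝ) (hdel : 0 < del)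
    (hld : del < lam) (D : Set ℝ)
    (hD1 : D ⊆ Set.Ioo (lam - del) (lam + del))
    (hD2 : Set.Ioo (lam - del) (lam + del) ⊆ closure D)
    (M : ℝ)
    (hcomm : ∀ s ∈ D, ∀ x : ℝ, 0 ≤ x → |s * f x - f (s * x)| < M) :
    ∃ c : ℝ, 0 < c ∧ Tendsto (fun x => f x / x) atTop (𝓝 c) := by
  obtain ⟨hf0, ⟨K, hK, hKf⟩, -⟩ := hf
  have hp : 0 < lam - del := by linarith
  have hpq : lam - del < lam + del := by linarith
  have hIcc : Icc (lam - del) (lam + del) ⊆ closure D := by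
    rw [← closure_Ioo hpq.ne]
    exact closure_minimal hD2 isClosed_closure
  have hperiod : ∀ s ∈ Icc (lam - del) (lam + del),
      IsCoarsePeriod (fun x => f x / x) s ((M + K) / s) := fun s hs =>
    isCoarsePeriod_div_self (hp.trans_le hs.1) fun x hx =>
      abs_mul_sub_le_of_mem_closure (fun x y hx hy => (hKf x y hx hy).2)
        (hD1.trans fun t ht => (hp.trans ht.1).le) (fun t ht x hx => (hcomm t ht x hx).le)
        (hIcc hs) hx
  obtain ⟨e, he, C, hC⟩ : ∃ e, 1 < e ∧ ∃ C, IsCoarsePeriod (fun x => f x / x) e C := by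
    rcases lt_or_ge 1 (lam + del) with h1 | h1
    · exact ⟨_, h1, _, hperiod _ (right_mem_Icc.2 hpq.le)⟩
    · exact ⟨_, one_lt_inv₀ hp |>.2 (by linarith), _, (hperiod _ (left_mem_Icc.2 hpq.le)).inv hp⟩
  choose! L hL hrL using fun x (hx : 0 < x) => hC.exists_tendsto_pow_mul he hx
  have hLconst : ∀ x, 0 < x → L x = L 1 := fun x hx =>
    eq_of_forall_mul_mem_Icc hp hpq (fun s hs y hy => (hperiod s hs).eq_of_tendsto_pow_mul he hy
      (hL _ (mul_pos (hp.trans_le hs.1) hy)) (hL y hy)) one_pos hx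
  have hlim : Tendsto (fun x => f x / x) atTop (𝓝 (L 1)) :=
    tendsto_of_abs_sub_le_div fun x hx => hLconst x hx ▸ hrL x hx
  exact ⟨L 1, (one_div_pos.2 (by linarith)).trans_le
    (one_div_le_of_tendsto_div_self hf0 (fun x y hx hy => (hKf x y hx hy).1) hlim), hlim⟩

/-- if a quasi-isometry `f` of `[0,∞)` almost-commutes (with a uniform
bound `M`) with multiplication by every `s` in a dense subset `D` of some interval
`(λ-δ, λ+δ)` with `λ > δ > 0`, then `f x / x` converges to some `c > 0`. -/
theorem stmt13 (f : ℝ → ℝ) (hf : IsQI f) (lam del : ℝ) (hdel : 0 < del)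
    (hld : del < lam) (D : Set ℝ)
    (hD1 : D ⊆ Set.Ioo (lam - del) (lam + del))
    (hD2 : Set.Ioo (lam - del) (lam + del) ⊆ closure D)
    (M : ℝ) (hM : 0 < M)
    (hcomm : ∀ s ∈ D, ∀ x : ℝ, 0 ≤ x → |s * f x - f (s * x)| < M) :
    ∃ c : ℝ, 0 < c ∧ Tendsto (fun x => f x / x) atTop (𝓝 c) :=
  stmt13_general f hf lam del hdel hld D hD1 hD2 M hcomm
end

section
/- For every λ > 1 there exists a strictly increasing, continuous, piecewise-linear quasi-isometry g : [0,∞) → [0,∞) such that: (i) sup_{x≥0} |g(λx) − λ·g(x)| < ∞, so the class [g] commutes with the class of x ↦ λx in QI(ℝ₊); (ii) g(x)/x does not converge as x → ∞, i.e., liminf_{x→∞} g(x)/x < limsup_{x→∞} g(x)/x, so [g] ∉ ∪_{c>0} H_c; and (iii) for c > 0, sup_{x≥0} |g(cx) − c·g(x)| < ∞ holds if and only if c = λ^r for some integer r. -/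
open Filter Topology

/-!
The map `g = zigzag λ` is the identity on `[0, 1]` and, on each `[λⁿ, λⁿ⁺¹]`, the copy
rescaled by `λⁿ` of a tent-shaped graph over `[1, λ]` with slopes `3/2` and `1/2` that touches
the diagonal only at the endpoints. The slopes make it bi-Lipschitz, and `g (λx) = λ g x` for
`x ≥ 1`. Along `λⁿ` the ratio `g x / x` equals `1`; along the rescaled apex `λⁿ (1 + λ) / 2`
it is a constant `> 1`. If `g` almost commutes with `x ↦ c x` for some `c ≥ 1`, evaluating at
`λⁿ` shows that `|g c - c| λⁿ` stays bounded, so `c` is a fixed point of `g`, hence a power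
of `λ`.
-/

open Set

def SlopesBetweenOn (a b : ℝ) (g : ℝ → ℝ) (s : Set ℝ) : Prop :=
  ∀ x ∈ s, ∀ y ∈ s, x ≤ y → a * (y - x) ≤ g y - g x ∧ g y - g x ≤ b * (y - x)

def AlmostCommutesWith (g : ℝ → ℝ) (c : ℝ) : Prop :=
  ∃ C : ℝ, ∀ x : ℝ, 0 ≤ x → |g (c * x) - c * g x| ≤ C

section SlopesBetween

variable {a b : ℝ} {g : ℝ → ℝ}

lemma slopesBetweenOn_Icc_of_affine {p q s : ℝ} (hs : s ∈ Icc a b)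
    (hg : ∀ x ∈ Icc p q, g x = g p + s * (x - p)) : SlopesBetweenOn a b g (Icc p q) := by
  intro x hx y hy hxy
  have hdiff : g y - g x = s * (y - x) := by rw [hg x hx, hg y hy]; ring
  rw [hdiff]
  exact ⟨mul_le_mul_of_nonneg_right hs.1 (sub_nonneg.2 hxy),
    mul_le_mul_of_nonneg_right hs.2 (sub_nonneg.2 hxy)⟩

lemma SlopesBetweenOn.Icc_trans {p q r : ℝ} (h₁ : SlopesBetweenOn a b g (Icc p q))
    (h₂ : SlopesBetweenOn a b g (Icc q r)) : SlopesBetweenOn a b g (Icc p r) := by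
  intro x hx y hy hxy
  by_cases hyq : y ≤ q
  · exact h₁ x ⟨hx.1, hxy.trans hyq⟩ y ⟨hx.1.trans hxy, hyq⟩ hxy
  by_cases hqx : q ≤ x
  · exact h₂ x ⟨hqx, hxy.trans hy.2⟩ y ⟨hqx.trans hxy, hy.2⟩ hxy
  push Not at hyq hqx
  obtain ⟨h₁l, h₁u⟩ := h₁ x ⟨hx.1, hqx.le⟩ q ⟨hx.1.trans hqx.le, le_rfl⟩ hqx.le
  obtain ⟨h₂l, h₂u⟩ := h₂ q ⟨le_rfl, hyq.le.trans hy.2⟩ y ⟨hyq.le, hy.2⟩ hyq.le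
  constructor <;> linarith

lemma slopesBetweenOn_Ici_of_affine_pieces {t : ℕ → ℝ} (htop : Tendsto t atTop atTop)
    (hg : ∀ n, ∃ s ∈ Icc a b, ∀ x ∈ Icc (t n) (t (n + 1)), g x = g (t n) + s * (x - t n)) :
    SlopesBetweenOn a b g (Ici (t 0)) := by
  have hIcc : ∀ N, SlopesBetweenOn a b g (Icc (t 0) (t N)) := by
    intro N
    induction N with
    | zero => intro x hx y hy _; rw [le_antisymm hx.2 hx.1, le_antisymm hy.2 hy.1]; simp
    | succ N ih =>
      obtain ⟨s, hs, hgN⟩ := hg N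
      exact ih.Icc_trans (slopesBetweenOn_Icc_of_affine hs hgN)
  intro x hx y hy hxy
  obtain ⟨N, hN⟩ := (htop.eventually_ge_atTop y).exists
  exact hIcc N x ⟨hx, hxy.trans hN⟩ y ⟨hy, hN⟩ hxy

variable {s : Set ℝ}

lemma SlopesBetweenOn.abs_sub_le (h : SlopesBetweenOn a b g s) (ha : 0 ≤ a) {x y : ℝ}
    (hx : x ∈ s) (hy : y ∈ s) : |g x - g y| ≤ b * |x - y| := by
  rcases le_total x y with hxy | hyx
  · obtain ⟨hl, hu⟩ := h x hx y hy hxy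
    rw [abs_sub_comm, abs_of_nonneg (by nlinarith), abs_sub_comm, abs_of_nonneg (by linarith)]
    exact hu
  · obtain ⟨hl, hu⟩ := h y hy x hx hyx
    rw [abs_of_nonneg (by nlinarith), abs_of_nonneg (by linarith)]
    exact hu

lemma SlopesBetweenOn.le_abs_sub (h : SlopesBetweenOn a b g s) {x y : ℝ} (hx : x ∈ s)
    (hy : y ∈ s) : a * |x - y| ≤ |g x - g y| := by
  rcases le_total x y with hxy | hyx
  · rw [abs_sub_comm x, abs_of_nonneg (sub_nonneg.2 hxy), abs_sub_comm]
    exact (h x hx y hy hxy).1.trans (le_abs_self _)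
  · rw [abs_of_nonneg (sub_nonneg.2 hyx)]
    exact (h y hy x hx hyx).1.trans (le_abs_self _)

lemma SlopesBetweenOn.strictMonoOn (h : SlopesBetweenOn a b g s) (ha : 0 < a) :
    StrictMonoOn g s := fun x hx y hy hxy => by
  have := (h x hx y hy hxy.le).1
  nlinarith

lemma SlopesBetweenOn.continuousOn (h : SlopesBetweenOn a b g s) (ha : 0 ≤ a) :
    ContinuousOn g s := by
  refine (LipschitzOnWith.of_dist_le_mul (K := b.toNNReal) fun x hx y hy => ?_).continuousOn
  rw [Real.dist_eq, Real.dist_eq]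
  exact (h.abs_sub_le ha hx hy).trans
    (mul_le_mul_of_nonneg_right (Real.le_coe_toNNReal b) (abs_nonneg _))

lemma SlopesBetweenOn.isQI (h : SlopesBetweenOn a b g (Ici 0)) (ha : 0 < a) (hg0 : g 0 = 0) :
    IsQI g := by
  have hlin : ∀ x, 0 ≤ x → a * x ≤ g x := fun x hx => by
    simpa [hg0] using (h 0 self_mem_Ici x hx hx).1
  set K := max b a⁻¹ + 1
  have hKa : a⁻¹ < K := by linarith [le_max_right b a⁻¹]
  have hKb : b ≤ K := by linarith [le_max_left b a⁻¹]
  have hK₀ : 0 < K := (inv_pos.2 ha).trans hKa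
  refine ⟨fun x hx => (mul_nonneg ha.le hx).trans (hlin x hx),
    ⟨K, by linarith [le_max_right b a⁻¹, inv_pos.2 ha], fun x y hx hy => ⟨?_, ?_⟩⟩,
    ⟨1, one_pos, fun z hz => ?_⟩⟩
  · have hKa' : 1 / K ≤ a := by simpa using (one_div_lt_one_div_of_lt (inv_pos.2 ha) hKa).le
    nlinarith [h.le_abs_sub hx hy, mul_le_mul_of_nonneg_right hKa' (abs_nonneg (x - y))]
  · nlinarith [h.abs_sub_le ha.le hx hy, mul_le_mul_of_nonneg_right hKb (abs_nonneg (x - y))]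
  · have hza : 0 ≤ z / a := div_nonneg hz ha.le
    have hgz : z ∈ Icc (g 0) (g (z / a)) :=
      ⟨by rwa [hg0], by simpa [mul_div_cancel₀ _ ha.ne'] using hlin _ hza⟩
    obtain ⟨x, hx, hgx⟩ :=
      intermediate_value_Icc hza ((h.continuousOn ha.le).mono fun x hx => hx.1) hgz
    exact ⟨x, hx.1, by rw [hgx, sub_self, abs_zero]; exact zero_le_one⟩

end SlopesBetween

section AlmostCommutes

variable {g : ℝ → ℝ} {c : ℝ}

lemma AlmostCommutesWith.inv (h : AlmostCommutesWith g c) (hc : 0 < c) :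
    AlmostCommutesWith g c⁻¹ := by
  obtain ⟨C, hC⟩ := h
  refine ⟨C / c, fun x hx => ?_⟩
  have hcx := hC (c⁻¹ * x) (by positivity)
  rw [← mul_assoc, mul_inv_cancel₀ hc.ne', one_mul] at hcx
  have hrw : g x - c * g (c⁻¹ * x) = -c * (g (c⁻¹ * x) - c⁻¹ * g x) := by field_simp; ring
  rw [hrw, abs_mul, abs_neg, abs_of_pos hc] at hcx
  rw [le_div_iff₀ hc]
  linarith

lemma almostCommutesWith_of_eq_of_le (hg : ContinuousOn g (Ici 0)) (hc : 0 < c) {B : ℝ}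
    (h : ∀ x, B ≤ x → g (c * x) = c * g x) : AlmostCommutesWith g c := by
  have hcont : ContinuousOn (fun x => g (c * x) - c * g x) (Icc 0 B) :=
    (hg.comp (continuousOn_const.mul continuousOn_id) fun x hx =>
      mem_Ici.2 (mul_nonneg hc.le hx.1)).sub
      (continuousOn_const.mul (hg.mono Icc_subset_Ici_self))
  obtain ⟨M, hM⟩ := isCompact_Icc.exists_bound_of_continuousOn hcont
  refine ⟨max M 0, fun x hx => ?_⟩
  rcases le_total x B with hxB | hBx
  · exact (hM x ⟨hx, hxB⟩).trans (le_max_left _ _)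
  · rw [h x hBx, sub_self, abs_zero]
    exact le_max_right _ _

end AlmostCommutes

lemma eq_zero_of_forall_abs_mul_pow_le {l a C : ℝ} (hl : 1 < l) (h : ∀ n : ℕ, |a| * l ^ n ≤ C) :
    a = 0 := by
  by_contra ha
  obtain ⟨n, hn⟩ := (((tendsto_pow_atTop_atTop_of_one_lt hl).const_mul_atTop
    (abs_pos.2 ha)).eventually_gt_atTop C).exists
  exact (h n).not_gt hn

noncomputable def zigzagProfile (lam t : ℝ) : ℝ :=
  min (3 / 2 * t - 1 / 2) ((t + lam) / 2)

noncomputable def zigzag (lam x : ℝ) : ℝ :=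
  if x < 1 then x
  else lam ^ ⌊Real.logb lam x⌋₊ * zigzagProfile lam (x / lam ^ ⌊Real.logb lam x⌋₊)

/-- The breakpoints `0, 1, m, λ, λ m, λ², …` of `zigzag lam`, where `m = (1 + λ) / 2`. -/
noncomputable def zigzagBreak (lam : ℝ) : ℕ → ℝ
  | 0 => 0
  | n + 1 => (if Even n then 1 else (1 + lam) / 2) * lam ^ (n / 2)

section Zigzag

variable {lam : ℝ}

section Profile

variable {t : ℝ}

lemma zigzagProfile_of_le (ht : t ≤ (1 + lam) / 2) : zigzagProfile lam t = 3 / 2 * t - 1 / 2 :=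
  min_eq_left (by linarith)

lemma zigzagProfile_of_ge (ht : (1 + lam) / 2 ≤ t) : zigzagProfile lam t = (t + lam) / 2 :=
  min_eq_right (by linarith)

lemma zigzagProfile_one (hl : 1 ≤ lam) : zigzagProfile lam 1 = 1 := by
  rw [zigzagProfile_of_le (by linarith)]; norm_num

lemma zigzagProfile_self (hl : 1 ≤ lam) : zigzagProfile lam lam = lam := by
  rw [zigzagProfile_of_ge (by linarith)]; ring

lemma lt_zigzagProfile (h₁ : 1 < t) (h₂ : t < lam) : t < zigzagProfile lam t :=
  lt_min (by linarith) (by linarith)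

end Profile

lemma zigzag_of_lt_one {x : ℝ} (hx : x < 1) : zigzag lam x = x := if_pos hx

lemma zigzag_pow_mul (hl : 1 < lam) (n : ℕ) {t : ℝ} (ht : t ∈ Icc 1 lam) :
    zigzag lam (lam ^ n * t) = lam ^ n * zigzagProfile lam t := by
  have hIco : ∀ n : ℕ, ∀ t ∈ Ico 1 lam,
      zigzag lam (lam ^ n * t) = lam ^ n * zigzagProfile lam t := by
    intro n t ⟨h₁, h₂⟩
    have hpow : 0 < lam ^ n := by positivity
    have hlog₀ : 0 ≤ Real.logb lam t := Real.logb_nonneg hl h₁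
    have hlog₁ : Real.logb lam t < 1 :=
      Real.logb_self_eq_one hl ▸ Real.logb_lt_logb hl (by linarith) h₂
    have hfloor : ⌊Real.logb lam (lam ^ n * t)⌋₊ = n := by
      rw [Real.logb_mul hpow.ne' (by linarith), Real.logb_pow, Real.logb_self_eq_one hl,
        mul_one, Nat.floor_eq_iff (by positivity)]
      constructor <;> linarith
    have hx : ¬ lam ^ n * t < 1 := not_lt.2 (one_le_mul_of_one_le_of_one_le
      (one_le_pow₀ hl.le) h₁)
    rw [zigzag, if_neg hx, hfloor, mul_div_cancel_left₀ _ hpow.ne']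
  rcases ht.2.lt_or_eq with hlt | heq
  · exact hIco n t ⟨ht.1, hlt⟩
  · rw [heq, ← pow_succ, ← mul_one (lam ^ (n + 1)), hIco (n + 1) 1 ⟨le_rfl, hl⟩,
      zigzagProfile_one hl.le, zigzagProfile_self hl.le, pow_succ, mul_one]

lemma exists_eq_pow_mul (hl : 1 < lam) {x : ℝ} (hx : 1 ≤ x) :
    ∃ n : ℕ, ∃ t ∈ Ico 1 lam, x = lam ^ n * t := by
  obtain ⟨n, hn₁, hn₂⟩ := exists_nat_pow_near hx hl
  have hpow : 0 < lam ^ n := by positivity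
  refine ⟨n, x / lam ^ n, ⟨(one_le_div hpow).2 hn₁, ?_⟩, (mul_div_cancel₀ _ hpow.ne').symm⟩
  rwa [div_lt_iff₀ hpow, mul_comm, ← pow_succ]

lemma zigzag_zpow_mul (hl : 1 < lam) (r : ℤ) {x : ℝ} (hx : 1 ≤ x) (hrx : 1 ≤ lam ^ r * x) :
    zigzag lam (lam ^ r * x) = lam ^ r * zigzag lam x := by
  obtain ⟨n, t, ht, rfl⟩ := exists_eq_pow_mul hl hx
  have hl₀ : lam ≠ 0 := by positivity
  have hrn : 0 ≤ r + n := by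
    by_contra! hneg
    have hle : lam ^ (r + n) ≤ lam⁻¹ := by
      simpa using zpow_le_zpow_right₀ hl.le (show r + n ≤ -1 by omega)
    have : lam ^ (r + n) * t < lam⁻¹ * lam :=
      mul_lt_mul' hle ht.2 (by linarith [ht.1]) (by positivity)
    rw [inv_mul_cancel₀ hl₀, zpow_add₀ hl₀, zpow_natCast, mul_assoc] at this
    linarith
  obtain ⟨m, hm⟩ := Int.eq_ofNat_of_zero_le hrn
  have hmul : ∀ y, lam ^ r * (lam ^ n * y) = lam ^ m * y := fun y => by
    rw [← zpow_natCast, ← zpow_natCast, ← mul_assoc, ← zpow_add₀ hl₀, hm]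
  rw [hmul, zigzag_pow_mul hl m (Ico_subset_Icc_self ht),
    zigzag_pow_mul hl n (Ico_subset_Icc_self ht), hmul]

lemma zigzag_pow (hl : 1 < lam) (n : ℕ) : zigzag lam (lam ^ n) = lam ^ n := by
  simpa [zigzagProfile_one hl.le] using zigzag_pow_mul hl n ⟨le_rfl, hl.le⟩

lemma zigzag_affine_of_profile_affine (hl : 1 < lam) (k : ℕ) {t₁ t₂ s : ℝ} (h₁ : 1 ≤ t₁)
    (h₂ : t₂ ≤ lam) (hp : ∀ u ∈ Icc t₁ t₂, zigzagProfile lam u = zigzagProfile lam t₁ + s * (u - t₁))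
    (x : ℝ) (hx : x ∈ Icc (lam ^ k * t₁) (lam ^ k * t₂)) :
    zigzag lam x = zigzag lam (lam ^ k * t₁) + s * (x - lam ^ k * t₁) := by
  have hpow : 0 < lam ^ k := by positivity
  obtain ⟨u, hu, rfl⟩ : ∃ u ∈ Icc t₁ t₂, x = lam ^ k * u :=
    ⟨x / lam ^ k, ⟨(le_div_iff₀' hpow).2 hx.1, (div_le_iff₀' hpow).2 hx.2⟩,
      (mul_div_cancel₀ _ hpow.ne').symm⟩
  rw [zigzag_pow_mul hl k ⟨h₁.trans hu.1, hu.2.trans h₂⟩,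
    zigzag_pow_mul hl k ⟨h₁, hu.1.trans (hu.2.trans h₂)⟩, hp _ hu]
  ring

lemma zigzagBreak_zero : zigzagBreak lam 0 = 0 := rfl

lemma zigzagBreak_odd (k : ℕ) : zigzagBreak lam (2 * k + 1) = lam ^ k := by
  simp [zigzagBreak]

lemma zigzagBreak_even (k : ℕ) : zigzagBreak lam (2 * k + 2) = (1 + lam) / 2 * lam ^ k := by
  simp only [zigzagBreak]
  rw [if_neg (by simp), show (2 * k + 1) / 2 = k by omega]

lemma zigzag_affine_piece (hl : 1 < lam) (n : ℕ) :
    ∃ s ∈ Icc (1 / 2 : ℝ) (3 / 2), ∀ x ∈ Icc (zigzagBreak lam n) (zigzagBreak lam (n + 1)),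
      zigzag lam x = zigzag lam (zigzagBreak lam n) + s * (x - zigzagBreak lam n) := by
  have hm₁ : 1 ≤ (1 + lam) / 2 := by linarith
  have hm₂ : (1 + lam) / 2 ≤ lam := by linarith
  obtain ⟨k, rfl | rfl⟩ := Nat.even_or_odd' n
  · cases k with
    | zero =>
      refine ⟨1, by norm_num, fun x hx => ?_⟩
      rw [zigzagBreak_zero, show 0 + 1 = 2 * 0 + 1 from rfl, zigzagBreak_odd, pow_zero] at hx
      rcases hx.2.lt_or_eq with hlt | rfl
      · simp [zigzagBreak_zero, zigzag_of_lt_one hlt, zigzag_of_lt_one one_pos]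
      · simpa [zigzagBreak_zero, zigzag_of_lt_one one_pos] using zigzag_pow hl 0
    | succ k =>
      have h₁ : zigzagBreak lam (2 * (k + 1)) = lam ^ k * ((1 + lam) / 2) := by
        rw [show 2 * (k + 1) = 2 * k + 2 by ring, zigzagBreak_even, mul_comm]
      rw [h₁, zigzagBreak_odd, pow_succ]
      refine ⟨1 / 2, by norm_num, zigzag_affine_of_profile_affine hl k hm₁ le_rfl fun u hu => ?_⟩
      rw [zigzagProfile_of_ge hu.1, zigzagProfile_of_ge le_rfl]
      ring
  · have h₂ : zigzagBreak lam (2 * k + 1 + 1) = lam ^ k * ((1 + lam) / 2) := by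
      rw [zigzagBreak_even, mul_comm]
    rw [h₂, zigzagBreak_odd]
    refine ⟨3 / 2, by norm_num, ?_⟩
    simpa only [mul_one] using zigzag_affine_of_profile_affine hl k le_rfl hm₂ fun u hu => by
      rw [zigzagProfile_of_le hu.2, zigzagProfile_of_le hm₁]
      ring

lemma zigzagBreak_strictMono (hl : 1 < lam) : StrictMono (zigzagBreak lam) := by
  refine strictMono_nat_of_lt_succ fun n => ?_
  obtain ⟨k, rfl | rfl⟩ := Nat.even_or_odd' n
  · cases k with
    | zero => simp [zigzagBreak]
    | succ k =>
      rw [show 2 * (k + 1) = 2 * k + 2 by ring, zigzagBreak_even,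
        show 2 * k + 2 + 1 = 2 * (k + 1) + 1 by ring, zigzagBreak_odd, pow_succ']
      have : 0 < lam ^ k := by positivity
      nlinarith
  · rw [zigzagBreak_odd, zigzagBreak_even]
    have : 0 < lam ^ k := by positivity
    nlinarith

lemma tendsto_zigzagBreak (hl : 1 < lam) : Tendsto (zigzagBreak lam) atTop atTop := by
  refine tendsto_atTop_atTop_of_monotone (zigzagBreak_strictMono hl).monotone fun b => ?_
  obtain ⟨k, hk⟩ := pow_unbounded_of_one_lt b hl
  exact ⟨2 * k + 1, by rw [zigzagBreak_odd]; exact hk.le⟩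

lemma zigzag_isPL (hl : 1 < lam) : IsPL (zigzag lam) :=
  ⟨zigzagBreak lam, zigzagBreak_zero, zigzagBreak_strictMono hl, tendsto_zigzagBreak hl,
    fun n => (zigzag_affine_piece hl n).imp fun _ hs => hs.2⟩

lemma zigzag_slopesBetweenOn (hl : 1 < lam) :
    SlopesBetweenOn (1 / 2) (3 / 2) (zigzag lam) (Ici 0) :=
  slopesBetweenOn_Ici_of_affine_pieces (tendsto_zigzagBreak hl) (zigzag_affine_piece hl)

lemma exists_pow_eq_of_zigzag_eq (hl : 1 < lam) {x : ℝ} (hx : 1 ≤ x) (h : zigzag lam x = x) :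
    ∃ n : ℕ, x = lam ^ n := by
  obtain ⟨n, t, ht, rfl⟩ := exists_eq_pow_mul hl hx
  rw [zigzag_pow_mul hl n (Ico_subset_Icc_self ht)] at h
  have hfix : zigzagProfile lam t = t := mul_left_cancel₀ (by positivity) h
  rcases ht.1.eq_or_lt with h₁ | h₁
  · exact ⟨n, by rw [← h₁, mul_one]⟩
  · exact absurd hfix (lt_zigzagProfile h₁ ht.2).ne'

lemma zigzag_almostCommutesWith_zpow (hl : 1 < lam) (r : ℤ) :
    AlmostCommutesWith (zigzag lam) (lam ^ r) := by
  refine almostCommutesWith_of_eq_of_le ((zigzag_slopesBetweenOn hl).continuousOn (by norm_num))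
    (by positivity) (B := max 1 (lam ^ (-r))) fun x hx => ?_
  refine zigzag_zpow_mul hl r ((le_max_left _ _).trans hx) ?_
  calc 1 = lam ^ r * lam ^ (-r) := by rw [← zpow_add₀ (by positivity), add_neg_cancel, zpow_zero]
    _ ≤ lam ^ r * x := by gcongr; exact (le_max_right _ _).trans hx

lemma exists_pow_eq_of_almostCommutesWith (hl : 1 < lam) {c : ℝ} (hc : 1 ≤ c)
    (h : AlmostCommutesWith (zigzag lam) c) : ∃ n : ℕ, c = lam ^ n := by
  obtain ⟨C, hC⟩ := h
  refine exists_pow_eq_of_zigzag_eq hl hc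
    (sub_eq_zero.1 (eq_zero_of_forall_abs_mul_pow_le (C := C) hl fun n => ?_))
  have hpow : 0 < lam ^ n := by positivity
  have hscale : zigzag lam (c * lam ^ n) = lam ^ n * zigzag lam c := by
    have hcn : 1 ≤ lam ^ (n : ℤ) * c := by
      rw [zpow_natCast]; exact one_le_mul_of_one_le_of_one_le (one_le_pow₀ hl.le) hc
    rw [mul_comm]
    simpa using zigzag_zpow_mul hl n hc hcn
  calc |zigzag lam c - c| * lam ^ n
      = |zigzag lam (c * lam ^ n) - c * zigzag lam (lam ^ n)| := by
        rw [hscale, zigzag_pow hl, show lam ^ n * zigzag lam c - c * lam ^ n =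
          (zigzag lam c - c) * lam ^ n by ring, abs_mul, abs_of_pos hpow]
    _ ≤ C := hC _ hpow.le

lemma zigzag_almostCommutesWith_iff (hl : 1 < lam) {c : ℝ} (hc : 0 < c) :
    AlmostCommutesWith (zigzag lam) c ↔ ∃ r : ℤ, c = lam ^ r := by
  refine ⟨fun h => ?_, fun ⟨r, hr⟩ => hr ▸ zigzag_almostCommutesWith_zpow hl r⟩
  rcases le_total 1 c with h₁ | h₁
  · obtain ⟨n, hn⟩ := exists_pow_eq_of_almostCommutesWith hl h₁ h
    exact ⟨n, by rw [hn, zpow_natCast]⟩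
  · obtain ⟨n, hn⟩ :=
      exists_pow_eq_of_almostCommutesWith hl ((one_le_inv₀ hc).2 h₁) (h.inv hc)
    exact ⟨-n, by rw [zpow_neg, zpow_natCast, ← hn, inv_inv]⟩

lemma zigzag_liminf_lt_limsup (hl : 1 < lam) :
    liminf (fun x => zigzag lam x / x) atTop < limsup (fun x => zigzag lam x / x) atTop := by
  have hm : (1 + lam) / 2 ∈ Icc 1 lam := ⟨by linarith, by linarith⟩
  have hratio : ∀ᶠ x in atTop, zigzag lam x / x ∈ Icc 0 (3 / 2) := by
    filter_upwards [eventually_gt_atTop 0] with x hx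
    have := zigzag_slopesBetweenOn hl 0 self_mem_Ici x hx.le hx.le
    rw [zigzag_of_lt_one one_pos, sub_zero, sub_zero] at this
    exact ⟨div_nonneg (by linarith) hx.le, (div_le_iff₀ hx).2 this.2⟩
  have hpow := tendsto_pow_atTop_atTop_of_one_lt hl
  have hliminf : liminf (fun x => zigzag lam x / x) atTop ≤ 1 :=
    liminf_le_of_frequently_le (hpow.frequently (Frequently.of_forall fun n => by
      rw [zigzag_pow hl, div_self (by positivity)]))
      (isBoundedUnder_of_eventually_ge (hratio.mono fun _ h => h.1))
  have hlimsup : zigzagProfile lam ((1 + lam) / 2) / ((1 + lam) / 2) ≤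
      limsup (fun x => zigzag lam x / x) atTop :=
    le_limsup_of_frequently_le ((hpow.atTop_mul_const (zero_lt_one.trans_le hm.1)).frequently
      (Frequently.of_forall fun n => by
        rw [zigzag_pow_mul hl n hm, mul_div_mul_left _ _ (by positivity)]))
      (isBoundedUnder_of_eventually_le (hratio.mono fun _ h => h.2))
  have hgap : 1 < zigzagProfile lam ((1 + lam) / 2) / ((1 + lam) / 2) :=
    (one_lt_div (by linarith)).2 (lt_zigzagProfile (by linarith) (by linarith))
  linarith

end Zigzag

/-- for every `λ > 1` there is a strictly increasing continuous
piecewise-linear quasi-isometry `g` of `[0,∞)` which (i) almost-commutes with `x ↦ λx`,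
(ii) has `g x / x` non-convergent (`liminf < limsup`), and (iii) almost-commutes with
`x ↦ cx` (for `c > 0`) iff `c = λ^r` for some integer `r`. -/
theorem stmt14 (lam : ℝ) (hlam : 1 < lam) :
    ∃ g : ℝ → ℝ, StrictMonoOn g (Set.Ici 0) ∧ ContinuousOn g (Set.Ici 0) ∧
      IsPL g ∧ IsQI g ∧
      (∃ C : ℝ, ∀ x : ℝ, 0 ≤ x → |g (lam * x) - lam * g x| ≤ C) ∧
      (liminf (fun x : ℝ => g x / x) atTop < limsup (fun x : ℝ => g x / x) atTop) ∧
      (∀ c : ℝ, 0 < c →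
        ((∃ C : ℝ, ∀ x : ℝ, 0 ≤ x → |g (c * x) - c * g x| ≤ C) ↔
          ∃ rr : ℤ, c = lam ^ rr)) := by
  have hslopes := zigzag_slopesBetweenOn hlam
  refine ⟨zigzag lam, hslopes.strictMonoOn (by norm_num), hslopes.continuousOn (by norm_num),
    zigzag_isPL hlam, hslopes.isQI (by norm_num) (zigzag_of_lt_one one_pos), ?_,
    zigzag_liminf_lt_limsup hlam, fun c hc => zigzag_almostCommutesWith_iff hlam hc⟩
  simpa [AlmostCommutesWith] using zigzag_almostCommutesWith_zpow hlam 1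
end
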